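/- arXiv:1410.0483 — 9 statements merged into one kernel-verified Lean document; each statement's English description precedes it below -/
import Mathlib

section
/- Let M be a positively ordered monoid and let a, b ∈ M. Then the following are equivalent: (1) there exists k ∈ ℕ with (k+1)·a ≤ k·b; (2) there exists k₀ ∈ ℕ such that (k+1)·a ≤ k·b for all k ≥ k₀; (3) for every n ≥ 1 there exists k ∈ ℕ with (k+n)·a ≤ k·b; (4) for every n ≥ 1 there exists k₀ ∈ ℕ such that (k+n)·a ≤ k·b for all k ≥ k₀; (5) there exists n ∈ ℕ with a ≤ n·b, and f(a) < 1 for every extended state f on M with f(b) = 1. -/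
/-!
For (5) ⇒ (1), assume `(k + 1) • a ≰ k • b` for all `k`. A partial state (an additive,
monotone, real-valued function on a submonoid) is recorded by its graph in `M × ℝ`. It extends
to any new element `x` dominated by its domain, Hahn–Banach style, with the value
`inf {(f q - f p) / m | p + m • x ≤ q}`, where inequalities are allowed to hold only after
adding a "catalyst" dominated by the domain: catalysts cancel against values by an Archimedean
argument, because `u + z ≤ v + z` telescopes to `k • u + z ≤ k • v + z`. On the multiples of
`b`, with `n • b ↦ n`, the hypothesis makes this infimum for `x = a` at least `1`. Zorn's lemma
then gives a maximal partial state; it is defined on everything dominated by a multiple of `b`,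
and extending it by `∞` elsewhere gives an extended state with `f b = 1 ≤ f a`.
-/

open scoped ENNReal

theorem le_of_forall_nsmul_le_nsmul_add {α : Type*} [AddCommGroup α] [LinearOrder α]
    [IsOrderedAddMonoid α] [Archimedean α] {r s c : α} (h : ∀ k : ℕ, k • r ≤ k • s + c) :
    r ≤ s := by
  by_contra! hsr
  obtain ⟨k, hk⟩ := exists_lt_nsmul (sub_pos.2 hsr) c
  rw [nsmul_sub, lt_sub_iff_add_lt'] at hk
  exact (h k).not_gt hk

theorem Nat.exists_eq_mul_add_of_mul_add_le {k n j : ℕ} (hj : k * (k + n) ≤ j) :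
    ∃ m r, j = m * k + r ∧ r + n ≤ m := by
  rcases k.eq_zero_or_pos with rfl | hk
  · exact ⟨j + n, j, by simp, le_rfl⟩
  refine ⟨j / k, j % k, (Nat.div_add_mod' j k).symm, ?_⟩
  have hr := Nat.mod_lt j hk
  have hm : k + n ≤ j / k := (Nat.le_div_iff_mul_le hk).2 (by linarith)
  omega

theorem lt_one_of_succ_nsmul_le {M : Type*} [AddMonoid M] [LE M] {a b : M} {k : ℕ}
    {f : M → ℝ≥0∞} (hf0 : f 0 = 0) (hadd : ∀ x y, f (x + y) = f x + f y)
    (hmono : ∀ x y, x ≤ y → f x ≤ f y) (hb : f b = 1)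
    (hk : (k + 1) • a ≤ k • b) : f a < 1 := by
  let φ : M →+ ℝ≥0∞ := ⟨⟨f, hf0⟩, hadd⟩
  have hφ : ∀ (n : ℕ) (x : M), f (n • x) = n * f x := fun n x => by
    simpa [φ] using map_nsmul φ n x
  by_contra! ha
  have : ((k + 1 : ℕ) : ℝ≥0∞) ≤ k := calc
    ((k + 1 : ℕ) : ℝ≥0∞) ≤ (k + 1 : ℕ) * f a := le_mul_of_one_le_right' ha
    _ = f ((k + 1) • a) := (hφ _ _).symm
    _ ≤ f (k • b) := hmono _ _ hk
    _ = k := by rw [hφ, hb, mul_one]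
  exact absurd (Nat.cast_le.1 this) (by omega)

section PositivelyOrdered

variable {M : Type*} [AddCommMonoid M] [PartialOrder M] [IsOrderedAddMonoid M]

theorem nsmul_add_le_nsmul_add {u v z : M} (h : u + z ≤ v + z) (k : ℕ) :
    k • u + z ≤ k • v + z := by
  induction k with
  | zero => simp
  | succ k ih =>
    calc (k + 1) • u + z = u + (k • u + z) := by rw [succ_nsmul']; abel
      _ ≤ u + (k • v + z) := by gcongr
      _ = k • v + (u + z) := by abel
      _ ≤ k • v + (v + z) := by gcongr
      _ = (k + 1) • v + z := by rw [succ_nsmul]; abel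

theorem add_nsmul_le_nsmul_of_succ_nsmul_le (h0 : ∀ x : M, 0 ≤ x) {a b : M} {k : ℕ}
    (hk : (k + 1) • a ≤ k • b) (n : ℕ) {j : ℕ} (hj : k * (k + n) ≤ j) :
    (j + n) • a ≤ j • b := by
  obtain ⟨m, r, rfl, hrm⟩ := Nat.exists_eq_mul_add_of_mul_add_le hj
  calc (m * k + r + n) • a ≤ (m * (k + 1)) • a := nsmul_le_nsmul_left (h0 a) (by nlinarith)
    _ = m • ((k + 1) • a) := mul_nsmul' _ _ _
    _ ≤ m • (k • b) := nsmul_le_nsmul_right hk m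
    _ = (m * k) • b := (mul_nsmul' _ _ _).symm
    _ ≤ (m * k + r) • b := nsmul_le_nsmul_left (h0 b) (Nat.le_add_right _ _)

theorem exists_succ_nsmul_le_of_nsmul_add_le (h0 : ∀ x : M, 0 ≤ x) {a b z : M} {d m L : ℕ}
    (hdm : d < m) (hz : z ≤ L • b) (h : m • a + z ≤ d • b + z) :
    ∃ k : ℕ, (k + 1) • a ≤ k • b := by
  refine ⟨(L + 1) * d + L, ?_⟩
  calc ((L + 1) * d + L + 1) • a ≤ ((L + 1) * m) • a :=
        nsmul_le_nsmul_left (h0 a) (by nlinarith)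
    _ = (L + 1) • (m • a) := mul_nsmul' _ _ _
    _ ≤ (L + 1) • (m • a) + z := le_add_of_nonneg_right (h0 z)
    _ ≤ (L + 1) • (d • b) + z := nsmul_add_le_nsmul_add h _
    _ ≤ (L + 1) • (d • b) + L • b := by gcongr
    _ = ((L + 1) * d + L) • b := by rw [add_nsmul _ ((L + 1) * d), mul_nsmul']

theorem add_le_of_nsmul_add_nsmul_add_le (h0 : ∀ x : M, 0 ≤ x) {a b : M} {N : ℕ}
    (hN : a ≤ N • b) (h1 : ∀ k : ℕ, ¬(k + 1) • a ≤ k • b) {i j m L : ℕ} {z : M}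
    (hz : z ≤ L • b) (h : i • b + m • a + z ≤ j • b + z) : i + m ≤ j := by
  by_contra! hji
  rcases le_or_gt i j with hij | hij
  · obtain ⟨d, rfl⟩ := Nat.exists_eq_add_of_le hij
    rw [add_nsmul] at h
    -- the common multiple `i • b` joins the catalyst
    obtain ⟨k, hk⟩ := exists_succ_nsmul_le_of_nsmul_add_le h0 (a := a) (d := d) (m := m)
      (z := i • b + z) (L := i + L) (by omega) (by rw [add_nsmul]; gcongr)
      (by convert h using 1 <;> abel)
    exact h1 k hk
  · obtain ⟨e, rfl⟩ := Nat.exists_eq_add_of_lt hij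
    have hb : (e + 1) • b + (j • b + z) ≤ 0 • b + (j • b + z) := calc
      (e + 1) • b + (j • b + z) ≤ (e + 1) • b + (j • b + z) + m • a :=
          le_add_of_nonneg_right (h0 _)
      _ = (j + e + 1) • b + m • a + z := by rw [add_assoc j, add_nsmul _ j]; abel
      _ ≤ 0 • b + (j • b + z) := by rw [zero_nsmul, zero_add]; exact h
    -- by `hb` the catalyst absorbs every multiple of `b`, in particular `N • b ≥ a`
    have ha : 1 • a + (j • b + z) ≤ 0 • b + (j • b + z) := calc
      1 • a + (j • b + z) ≤ N • ((e + 1) • b) + (j • b + z) := by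
          rw [one_nsmul, ← mul_nsmul']
          gcongr
          exact hN.trans (nsmul_le_nsmul_left (h0 b) (Nat.le_mul_of_pos_right N e.succ_pos))
      _ ≤ N • (0 • b) + (j • b + z) := nsmul_add_le_nsmul_add hb N
      _ = 0 • b + (j • b + z) := by simp
    obtain ⟨k, hk⟩ := exists_succ_nsmul_le_of_nsmul_add_le h0 zero_lt_one
      (by rw [add_nsmul]; gcongr) ha
    exact h1 k hk

end PositivelyOrdered

namespace AddSubmonoid

variable {M : Type*} [AddCommMonoid M] [PartialOrder M] {G : AddSubmonoid (M × ℝ)}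

/-- The graph of a partial state: monotonicity along the first coordinate also makes the graph
functional, so `G` is the graph of an additive, monotone function on its domain. -/
def IsMonotoneGraph (G : AddSubmonoid (M × ℝ)) : Prop :=
  ∀ ⦃p q : M × ℝ⦄, p ∈ G → q ∈ G → p.1 ≤ q.1 → p.2 ≤ q.2

def Dominates (G : AddSubmonoid (M × ℝ)) (z : M) : Prop :=
  ∃ p ∈ G, z ≤ p.1

theorem dominates_of_mem {p : M × ℝ} (hp : p ∈ G) : G.Dominates p.1 := ⟨p, hp, le_rfl⟩

theorem Dominates.of_le {y z : M} (hz : G.Dominates z) (hyz : y ≤ z) : G.Dominates y :=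
  let ⟨p, hp, hzp⟩ := hz
  ⟨p, hp, hyz.trans hzp⟩

theorem isMonotoneGraph_sSup {c : Set (AddSubmonoid (M × ℝ))}
    (hc : ∀ G ∈ c, G.IsMonotoneGraph) (hchain : IsChain (· ≤ ·) c) (hne : c.Nonempty) :
    (sSup c).IsMonotoneGraph := by
  intro p q hp hq hpq
  rw [mem_sSup_of_directedOn hne hchain.directedOn] at hp hq
  obtain ⟨G, hG, hpG⟩ := hp
  obtain ⟨H, hH, hqH⟩ := hq
  rcases hchain.total hG hH with hGH | hHG
  · exact hc H hH (hGH hpG) hqH hpq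
  · exact hc G hG hpG (hHG hqH) hpq

def upperEstimates (G : AddSubmonoid (M × ℝ)) (x : M) : Set ℝ :=
  {t | ∃ p ∈ G, ∃ q ∈ G, ∃ m : ℕ, 0 < m ∧ ∃ z, G.Dominates z ∧
    p.1 + m • x + z ≤ q.1 + z ∧ t = (q.2 - p.2) / m}

theorem upperEstimates_nonempty {x : M} (hx : G.Dominates x) : (G.upperEstimates x).Nonempty :=
  let ⟨w, hw, hxw⟩ := hx
  ⟨_, 0, G.zero_mem, w, hw, 1, one_pos, 0, ⟨0, G.zero_mem, le_rfl⟩, by simpa using hxw, rfl⟩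

def IsCompatible (G : AddSubmonoid (M × ℝ)) (x : M) (t : ℝ) : Prop :=
  ∀ ⦃p q : M × ℝ⦄, p ∈ G → q ∈ G → ∀ ⦃z : M⦄, G.Dominates z → ∀ m : ℕ,
    (p.1 + m • x + z ≤ q.1 + z → p.2 + m * t ≤ q.2) ∧
    (p.1 + z ≤ q.1 + m • x + z → p.2 ≤ q.2 + m * t)

/-- Off the domain of `G` this is an empty infimum, i.e. `⊤`. -/
noncomputable def stateOf (G : AddSubmonoid (M × ℝ)) (y : M) : ℝ≥0∞ :=
  ⨅ (r : ℝ) (_ : (y, r) ∈ G), ENNReal.ofReal r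

theorem IsMonotoneGraph.stateOf_eq (hG : G.IsMonotoneGraph) {y : M} {r : ℝ}
    (hy : (y, r) ∈ G) : G.stateOf y = ENNReal.ofReal r :=
  le_antisymm (iInf₂_le r hy) (le_iInf₂ fun _ hr => ENNReal.ofReal_le_ofReal (hG hy hr le_rfl))

theorem stateOf_eq_top {y : M} (hy : ¬G.Dominates y) : G.stateOf y = ⊤ := by
  simp only [stateOf, iInf_eq_top]
  exact fun r hr => (hy (dominates_of_mem hr)).elim

theorem IsMonotoneGraph.monotone_stateOf (hG : G.IsMonotoneGraph)
    (hfull : ∀ y, G.Dominates y → ∃ r, (y, r) ∈ G) : Monotone G.stateOf := by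
  intro x y hxy
  by_cases hy : G.Dominates y
  · obtain ⟨r, hr⟩ := hfull x (hy.of_le hxy)
    obtain ⟨s, hs⟩ := hfull y hy
    rw [hG.stateOf_eq hr, hG.stateOf_eq hs]
    exact ENNReal.ofReal_le_ofReal (hG hr hs hxy)
  · rw [stateOf_eq_top hy]
    exact le_top

variable [IsOrderedAddMonoid M]

theorem Dominates.add {y z : M} (hy : G.Dominates y) (hz : G.Dominates z) :
    G.Dominates (y + z) :=
  let ⟨p, hp, hyp⟩ := hy
  let ⟨q, hq, hzq⟩ := hz
  ⟨p + q, G.add_mem hp hq, add_le_add hyp hzq⟩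

theorem Dominates.nsmul {z : M} (hz : G.Dominates z) (n : ℕ) : G.Dominates (n • z) :=
  let ⟨p, hp, hzp⟩ := hz
  ⟨n • p, G.nsmul_mem hp n, nsmul_le_nsmul_right hzp n⟩

theorem IsMonotoneGraph.le_of_add_le_add (h0 : ∀ x : M, 0 ≤ x) (hG : G.IsMonotoneGraph)
    {p q : M × ℝ} (hp : p ∈ G) (hq : q ∈ G) {z : M} (hz : G.Dominates z)
    (h : p.1 + z ≤ q.1 + z) : p.2 ≤ q.2 := by
  obtain ⟨w, hw, hzw⟩ := hz
  refine le_of_forall_nsmul_le_nsmul_add (c := w.2) fun k => ?_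
  have hle : (k • p).1 ≤ (k • q + w).1 := calc
    (k • p).1 ≤ k • p.1 + z := le_add_of_nonneg_right (h0 z)
    _ ≤ k • q.1 + z := nsmul_add_le_nsmul_add h k
    _ ≤ (k • q + w).1 := by simp only [Prod.fst_add, Prod.smul_fst]; gcongr
  simpa using hG (G.nsmul_mem hp k) (G.add_mem (G.nsmul_mem hq k) hw) hle

/-- The two witnesses are combined with multiplicities `m'` and `m`, so that the multiples of
`x` match and can be cancelled. -/
theorem IsMonotoneGraph.mul_sub_le_mul_sub (h0 : ∀ x : M, 0 ≤ x) (hG : G.IsMonotoneGraph)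
    {x : M} (hx : G.Dominates x) {p q p' q' : M × ℝ} (hp : p ∈ G) (hq : q ∈ G)
    (hp' : p' ∈ G) (hq' : q' ∈ G) {m m' : ℕ} {z z' : M} (hz : G.Dominates z) (hz' : G.Dominates z')
    (hlow : p.1 + z ≤ q.1 + m • x + z) (hup : p'.1 + m' • x + z' ≤ q'.1 + z') :
    (m' : ℝ) * (p.2 - q.2) ≤ m * (q'.2 - p'.2) := by
  have h := hG.le_of_add_le_add h0 (p := m' • p + m • p') (q := m' • q + m • q')
    (G.add_mem (G.nsmul_mem hp _) (G.nsmul_mem hp' _))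
    (G.add_mem (G.nsmul_mem hq _) (G.nsmul_mem hq' _))
    (((hx.nsmul (m' * m)).add (hz.nsmul m')).add (hz'.nsmul m)) (calc
      (m' • p + m • p').1 + ((m' * m) • x + m' • z + m • z')
          = m' • (p.1 + z) + m • (p'.1 + m' • x + z') := by
        simp only [Prod.fst_add, Prod.smul_fst, nsmul_add, mul_nsmul]; abel
      _ ≤ m' • (q.1 + m • x + z) + m • (q'.1 + z') := by gcongr
      _ = (m' • q + m • q').1 + ((m' * m) • x + m' • z + m • z') := by
        simp only [Prod.fst_add, Prod.smul_fst, nsmul_add, mul_nsmul']; abel)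
  simp only [Prod.snd_add, Prod.smul_snd, nsmul_eq_mul] at h
  linarith

theorem IsMonotoneGraph.isCompatible_sInf_upperEstimates (h0 : ∀ x : M, 0 ≤ x)
    (hG : G.IsMonotoneGraph) {x : M} (hx : G.Dominates x) :
    G.IsCompatible x (sInf (G.upperEstimates x)) := by
  have hbdd : BddBelow (G.upperEstimates x) := by
    refine ⟨0, ?_⟩
    rintro _ ⟨p, hp, q, hq, m, -, z, hz, h, rfl⟩
    have hpq := hG.le_of_add_le_add h0 hp hq hz <| le_trans
      (by rw [add_right_comm]; exact le_add_of_nonneg_right (h0 _)) h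
    exact div_nonneg (by linarith) m.cast_nonneg
  intro p q hp hq z hz m
  rcases m.eq_zero_or_pos with rfl | hm
  · simpa using hG.le_of_add_le_add h0 hp hq hz
  have hm₀ : (0 : ℝ) < m := by exact_mod_cast hm
  constructor
  · intro h
    have := csInf_le hbdd ⟨p, hp, q, hq, m, hm, z, hz, h, rfl⟩
    rw [le_div_iff₀ hm₀] at this
    linarith
  · intro h
    have : (p.2 - q.2) / m ≤ sInf (G.upperEstimates x) := by
      refine le_csInf (upperEstimates_nonempty hx) ?_
      rintro _ ⟨p', hp', q', hq', m', hm', z', hz', h', rfl⟩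
      rw [div_le_div_iff₀ hm₀ (by exact_mod_cast hm')]
      linarith [hG.mul_sub_le_mul_sub h0 hx hp hq hp' hq' hz hz' h h']
    rw [div_le_iff₀ hm₀] at this
    linarith

theorem IsCompatible.isMonotoneGraph_sup_closure {x : M} {t : ℝ} (ht : G.IsCompatible x t)
    (hx : G.Dominates x) :
    (G ⊔ closure {(x, t)}).IsMonotoneGraph := by
  have mem : ∀ {p}, p ∈ G ⊔ closure {(x, t)} → ∃ q ∈ G, ∃ n : ℕ, p = q + n • (x, t) := by
    intro p hp
    obtain ⟨q, hq, y, hy, rfl⟩ := mem_sup.1 hp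
    obtain ⟨n, rfl⟩ := mem_closure_singleton.1 hy
    exact ⟨q, hq, n, rfl⟩
  intro p' q' hp' hq' hle
  obtain ⟨p, hp, n, rfl⟩ := mem hp'
  obtain ⟨q, hq, n', rfl⟩ := mem hq'
  simp only [Prod.fst_add, Prod.snd_add, Prod.smul_fst, Prod.smul_snd, nsmul_eq_mul] at hle ⊢
  rcases le_total n n' with hnn' | hn'n
  · obtain ⟨d, rfl⟩ := Nat.exists_eq_add_of_le hnn'
    have := (ht hp hq (hx.nsmul n) d).2 <| by
      rwa [add_nsmul, add_comm (n • x), ← add_assoc] at hle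
    push_cast
    linarith
  · obtain ⟨d, rfl⟩ := Nat.exists_eq_add_of_le hn'n
    have := (ht hp hq (hx.nsmul n') d).1 <| by
      rwa [add_nsmul, add_comm (n' • x), ← add_assoc] at hle
    push_cast
    linarith

theorem IsMonotoneGraph.exists_le_forall_dominates (h0 : ∀ x : M, 0 ≤ x)
    (hG : G.IsMonotoneGraph) :
    ∃ H, G ≤ H ∧ H.IsMonotoneGraph ∧ ∀ y, H.Dominates y → ∃ r, (y, r) ∈ H := by
  obtain ⟨H, hGH, hmax⟩ := zorn_le_nonempty₀ {H : AddSubmonoid (M × ℝ) | H.IsMonotoneGraph}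
    (fun c hc hchain K hK => ⟨sSup c, isMonotoneGraph_sSup hc hchain ⟨K, hK⟩,
      fun _ => le_sSup⟩) G hG
  refine ⟨H, hGH, hmax.prop, fun y hy => ⟨sInf (H.upperEstimates y), ?_⟩⟩
  have hext :=
    (hmax.prop.isCompatible_sInf_upperEstimates h0 hy).isMonotoneGraph_sup_closure hy
  exact hmax.2 hext le_sup_left (mem_sup_right (subset_closure rfl))

theorem IsMonotoneGraph.stateOf_add (h0 : ∀ x : M, 0 ≤ x) (hG : G.IsMonotoneGraph)
    (hfull : ∀ y, G.Dominates y → ∃ r, (y, r) ∈ G) (x y : M) :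
    G.stateOf (x + y) = G.stateOf x + G.stateOf y := by
  by_cases hx : G.Dominates x
  · by_cases hy : G.Dominates y
    · obtain ⟨r, hr⟩ := hfull x hx
      obtain ⟨s, hs⟩ := hfull y hy
      have hr0 : 0 ≤ r := hG G.zero_mem hr (h0 x)
      have hs0 : 0 ≤ s := hG G.zero_mem hs (h0 y)
      rw [hG.stateOf_eq (G.add_mem hr hs), hG.stateOf_eq hr, hG.stateOf_eq hs]
      exact ENNReal.ofReal_add hr0 hs0
    · have hxy : ¬G.Dominates (x + y) := fun h => hy (h.of_le (le_add_of_nonneg_left (h0 x)))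
      rw [stateOf_eq_top hy, stateOf_eq_top hxy, add_top]
  · have hxy : ¬G.Dominates (x + y) := fun h => hx (h.of_le (le_add_of_nonneg_right (h0 y)))
    rw [stateOf_eq_top hx, stateOf_eq_top hxy, top_add]

theorem IsMonotoneGraph.exists_extendedState (h0 : ∀ x : M, 0 ≤ x) (hG : G.IsMonotoneGraph) :
    ∃ f : M → ℝ≥0∞, f 0 = 0 ∧ (∀ x y, f (x + y) = f x + f y) ∧ Monotone f ∧
      ∀ y r, (y, r) ∈ G → f y = ENNReal.ofReal r := by
  obtain ⟨H, hGH, hH, hfull⟩ := hG.exists_le_forall_dominates h0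
  refine ⟨H.stateOf, ?_, hH.stateOf_add h0 hfull, hH.monotone_stateOf hfull,
    fun y r hy => hH.stateOf_eq (hGH hy)⟩
  simpa using hH.stateOf_eq H.zero_mem

end AddSubmonoid

open AddSubmonoid in
theorem exists_extendedState_of_forall_not_succ_nsmul_le {M : Type*} [AddCommMonoid M]
    [PartialOrder M] [IsOrderedAddMonoid M] (h0 : ∀ x : M, 0 ≤ x) {a b : M} {N : ℕ}
    (hN : a ≤ N • b) (h1 : ∀ k : ℕ, ¬(k + 1) • a ≤ k • b) :
    ∃ f : M → ℝ≥0∞, f 0 = 0 ∧ (∀ x y, f (x + y) = f x + f y) ∧ Monotone f ∧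
      f b = 1 ∧ 1 ≤ f a := by
  set G := closure {((b, 1) : M × ℝ)}
  have hG : G.IsMonotoneGraph := by
    intro _ _ hp hq hpq
    obtain ⟨i, rfl⟩ := mem_closure_singleton.1 hp
    obtain ⟨j, rfl⟩ := mem_closure_singleton.1 hq
    have := add_le_of_nsmul_add_nsmul_add_le h0 hN h1 (m := 0) (L := 0) (z := 0)
      (zero_nsmul b).ge (by simpa using hpq)
    simpa using this
  have ha : G.Dominates a := ⟨N • (b, 1), G.nsmul_mem (subset_closure rfl) N, by simpa⟩
  have hone : 1 ≤ sInf (G.upperEstimates a) := by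
    refine le_csInf (upperEstimates_nonempty ha) ?_
    rintro _ ⟨p, hp, q, hq, m, hm, z, ⟨w, hw, hzw⟩, h, rfl⟩
    obtain ⟨i, rfl⟩ := mem_closure_singleton.1 hp
    obtain ⟨j, rfl⟩ := mem_closure_singleton.1 hq
    obtain ⟨L, rfl⟩ := mem_closure_singleton.1 hw
    have := add_le_of_nsmul_add_nsmul_add_le h0 hN h1 (by simpa using hzw) (by simpa using h)
    rw [le_div_iff₀ (by exact_mod_cast hm)]
    have hmij : (m : ℝ) + i ≤ j := by exact_mod_cast (by omega : m + i ≤ j)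
    simp only [Prod.smul_snd, nsmul_eq_mul, mul_one, one_mul]
    linarith
  -- `a` gets the largest compatible value, which is at least `1`
  have hext := (hG.isCompatible_sInf_upperEstimates h0 ha).isMonotoneGraph_sup_closure ha
  obtain ⟨f, hf0, hadd, hmono, hfG⟩ := hext.exists_extendedState h0
  refine ⟨f, hf0, hadd, hmono, ?_, ?_⟩
  · simpa using hfG b 1 (mem_sup_left (subset_closure rfl))
  · rw [hfG a _ (mem_sup_right (subset_closure rfl))]
    simpa using ENNReal.ofReal_le_ofReal hone

/-- Let `M` be a positively ordered monoid (an ordered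
commutative monoid in which `0` is the least element) and `a b : M`.
The following are equivalent:
(1) `(k+1)•a ≤ k•b` for some `k`;
(2) `(k+1)•a ≤ k•b` for all sufficiently large `k`;
(3) for every `n ≥ 1` there is `k` with `(k+n)•a ≤ k•b`;
(4) for every `n ≥ 1`, `(k+n)•a ≤ k•b` for all sufficiently large `k`;
(5) `a ≤ n•b` for some `n`, and `f a < 1` for every extended state `f` on `M`
normalized at `b`. -/
theorem stmt0 {M : Type*} [AddCommMonoid M] [PartialOrder M] [IsOrderedAddMonoid M] (h0 : ∀ x : M, 0 ≤ x) (a b : M) :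
    List.TFAE
      [ (∃ k : ℕ, (k + 1) • a ≤ k • b),
        (∃ k₀ : ℕ, ∀ k : ℕ, k₀ ≤ k → (k + 1) • a ≤ k • b),
        (∀ n : ℕ, 1 ≤ n → ∃ k : ℕ, (k + n) • a ≤ k • b),
        (∀ n : ℕ, 1 ≤ n → ∃ k₀ : ℕ, ∀ k : ℕ, k₀ ≤ k → (k + n) • a ≤ k • b),
        ((∃ n : ℕ, a ≤ n • b) ∧
          ∀ f : M → ℝ≥0∞, f 0 = 0 → (∀ x y : M, f (x + y) = f x + f y) →
            (∀ x y : M, x ≤ y → f x ≤ f y) → f b = 1 → f a < 1) ] := by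
  tfae_have 1 → 4 := fun ⟨k, hk⟩ n _ =>
    ⟨k * (k + n), fun _ hj => add_nsmul_le_nsmul_of_succ_nsmul_le h0 hk n hj⟩
  tfae_have 4 → 2 := fun h => h 1 le_rfl
  tfae_have 2 → 1 := fun ⟨k₀, hk⟩ => ⟨k₀, hk k₀ le_rfl⟩
  tfae_have 4 → 3 := fun h n hn => (h n hn).imp fun k₀ hk => hk k₀ le_rfl
  tfae_have 3 → 1 := fun h => h 1 le_rfl
  tfae_have 1 → 5 := fun ⟨k, hk⟩ =>
    ⟨⟨k, (one_nsmul a).ge.trans ((nsmul_le_nsmul_left (h0 a) (by omega)).trans hk)⟩,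
      fun _ hf0 hadd hmono hb => lt_one_of_succ_nsmul_le hf0 hadd hmono hb hk⟩
  tfae_have 5 → 1 := by
    rintro ⟨⟨N, hN⟩, hst⟩
    by_contra! h1
    obtain ⟨f, hf0, hadd, hmono, hb, ha⟩ :=
      exists_extendedState_of_forall_not_succ_nsmul_le h0 hN h1
    exact (hst f hf0 hadd (fun _ _ h => hmono h) hb).not_ge ha
  tfae_finish
end

section
/- Let M be a positively ordered monoid, N ⊆ M a submonoid, f : N → [0,∞) a state on N (an additive, order-preserving map with f(0) = 0, where N carries the order induced from M), x ∈ M, and q a nonnegative real number. Assume: (i) for all y₁, y₂ ∈ N, all m ≥ 1 and all m̄ ∈ ℕ, if y₁ + m̄·x ≤ y₂ + (m+m̄)·x in M then f(y₁) ≤ f(y₂) + m·q; and (ii) for all z₁, z₂ ∈ N, all n ≥ 1 and all n̄ ∈ ℕ, if z₁ + (n+n̄)·x ≤ z₂ + n̄·x in M then f(z₁) + n·q ≤ f(z₂). Then the assignment y + k·x ↦ f(y) + k·q (for y ∈ N, k ∈ ℕ) is a well-defined state on the submonoid of M generated by N and x; in particular there exists a state f̃ on this submonoid extending f with f̃(x)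 = q. -/
open scoped NNReal

/-!
Every element of `N ⊔ closure {x}` has the form `y + k • x` with `y ∈ N`, so the only issue is
that `y₁ + k₁ • x ≤ y₂ + k₂ • x` forces `f y₁ + k₁ • q ≤ f y₂ + k₂ • q` (which gives well-definedness
and monotonicity at once). For `k₁ < k₂` this is (i), for `k₁ > k₂` it is (ii). For `k₁ = k₂`,
multiplying by `t` and adding one more `x` on the right (using `0 ≤ x`) gives, by (i),
`t • f y₁ ≤ t • f y₂ + q` for every `t`, hence `f y₁ ≤ f y₂` by the Archimedean property.
-/

theorem le_of_forall_nsmul_le_nsmul_add_s1 {α : Type*} [AddCommMonoid α] [LinearOrder α]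
    [IsOrderedCancelAddMonoid α] [ExistsAddOfLE α] [Archimedean α] {a b c : α}
    (h : ∀ t : ℕ, t • a ≤ t • b + c) : a ≤ b := by
  by_contra! hba
  obtain ⟨d, hd, rfl⟩ := exists_pos_add_of_lt' hba
  obtain ⟨n, hn⟩ := Archimedean.arch c hd
  have hsucc : (n + 1) • d ≤ c := by
    simpa [smul_add, add_assoc] using h (n + 1)
  exact (hsucc.trans hn).not_gt (nsmul_lt_nsmul_left hd n.lt_succ_self)

section OrderedMonoid

variable {M : Type*} [AddCommMonoid M] [PartialOrder M] [IsOrderedAddMonoid M]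
  {N : AddSubmonoid M} {x : M} {q : ℝ≥0}

theorem map_le_of_add_nsmul_le_add_nsmul (f : N →+ ℝ≥0) (hx : 0 ≤ x)
    (hi : ∀ (y₁ y₂ : N) (m : ℕ), 1 ≤ m → ∀ mb : ℕ,
      (y₁ : M) + mb • x ≤ (y₂ : M) + (m + mb) • x → f y₁ ≤ f y₂ + m • q)
    {y₁ y₂ : N} {k : ℕ} (h : (y₁ : M) + k • x ≤ (y₂ : M) + k • x) : f y₁ ≤ f y₂ := by
  refine le_of_forall_nsmul_le_nsmul_add_s1 (c := q) fun t ↦ ?_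
  have hmul : ((t • y₁ : N) : M) + (t * k) • x ≤ ((t • y₂ : N) : M) + (1 + t * k) • x :=
    calc ((t • y₁ : N) : M) + (t * k) • x = t • ((y₁ : M) + k • x) := by
          simp [smul_add, mul_nsmul']
      _ ≤ t • ((y₂ : M) + k • x) := nsmul_le_nsmul_right h t
      _ = ((t • y₂ : N) : M) + (t * k) • x := by simp [smul_add, mul_nsmul']
      _ ≤ ((t • y₂ : N) : M) + (1 + t * k) • x := by
          rw [add_nsmul, one_nsmul, add_left_comm]
          exact le_add_of_nonneg_left hx
  simpa using hi (t • y₁) (t • y₂) 1 le_rfl (t * k) hmul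

theorem map_add_nsmul_le_of_add_nsmul_le (f : N →+ ℝ≥0) (hx : 0 ≤ x)
    (hi : ∀ (y₁ y₂ : N) (m : ℕ), 1 ≤ m → ∀ mb : ℕ,
      (y₁ : M) + mb • x ≤ (y₂ : M) + (m + mb) • x → f y₁ ≤ f y₂ + m • q)
    (hii : ∀ (z₁ z₂ : N) (n : ℕ), 1 ≤ n → ∀ nb : ℕ,
      (z₁ : M) + (n + nb) • x ≤ (z₂ : M) + nb • x → f z₁ + n • q ≤ f z₂)
    {y₁ y₂ : N} {k₁ k₂ : ℕ} (h : (y₁ : M) + k₁ • x ≤ (y₂ : M) + k₂ • x) :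
    f y₁ + k₁ • q ≤ f y₂ + k₂ • q := by
  rcases lt_trichotomy k₁ k₂ with hlt | rfl | hgt
  · obtain ⟨m, hm, rfl⟩ : ∃ m, 1 ≤ m ∧ k₂ = m + k₁ := ⟨k₂ - k₁, by omega, by omega⟩
    calc f y₁ + k₁ • q ≤ f y₂ + m • q + k₁ • q := by gcongr; exact hi y₁ y₂ m hm k₁ h
      _ = f y₂ + (m + k₁) • q := by rw [add_nsmul, add_assoc]
  · exact add_le_add_left (map_le_of_add_nsmul_le_add_nsmul f hx hi h) _
  · obtain ⟨n, hn, rfl⟩ : ∃ n, 1 ≤ n ∧ k₁ = n + k₂ := ⟨k₁ - k₂, by omega, by omega⟩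
    calc f y₁ + (n + k₂) • q = f y₁ + n • q + k₂ • q := by rw [add_nsmul, add_assoc]
      _ ≤ f y₂ + k₂ • q := by gcongr; exact hii y₁ y₂ n hn k₂ h

end OrderedMonoid

namespace AddSubmonoid

variable {M : Type*} [AddCommMonoid M] {N : AddSubmonoid M}

theorem exists_add_nsmul_eq_of_mem_sup_closure_singleton {x z : M}
    (hz : z ∈ N ⊔ closure {x}) : ∃ p : N × ℕ, (p.1 : M) + p.2 • x = z := by
  obtain ⟨y, hy, w, hw, rfl⟩ := mem_sup.mp hz
  obtain ⟨k, rfl⟩ := mem_closure_singleton.mp hw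
  exact ⟨(⟨y, hy⟩, k), rfl⟩

noncomputable def extendAddNsmul (f : N →+ ℝ≥0) (x : M) (q : ℝ≥0) (u : ↥(N ⊔ closure {x})) :
    ℝ≥0 :=
  let p := (exists_add_nsmul_eq_of_mem_sup_closure_singleton u.2).choose
  f p.1 + p.2 • q

end AddSubmonoid

open AddSubmonoid

section Compatible

variable {M : Type*} [AddCommMonoid M] [Preorder M] {N : AddSubmonoid M} {x : M} {q : ℝ≥0}
  (f : N →+ ℝ≥0) (hle : ∀ (y₁ y₂ : N) (k₁ k₂ : ℕ),
  (y₁ : M) + k₁ • x ≤ (y₂ : M) + k₂ • x → f y₁ + k₁ • q ≤ f y₂ + k₂ • q)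
include hle

theorem extendAddNsmul_eq {u : ↥(N ⊔ closure {x})} {y : N} {k : ℕ}
    (hu : (u : M) = y + k • x) : extendAddNsmul f x q u = f y + k • q := by
  have hp := (exists_add_nsmul_eq_of_mem_sup_closure_singleton u.2).choose_spec
  exact le_antisymm (hle _ _ _ _ (hp.trans hu).le) (hle _ _ _ _ (hp.trans hu).ge)

theorem extendAddNsmul_add (u v : ↥(N ⊔ closure {x})) :
    extendAddNsmul f x q (u + v) = extendAddNsmul f x q u + extendAddNsmul f x q v := by
  obtain ⟨⟨y₁, k₁⟩, hu⟩ := exists_add_nsmul_eq_of_mem_sup_closure_singleton u.2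
  obtain ⟨⟨y₂, k₂⟩, hv⟩ := exists_add_nsmul_eq_of_mem_sup_closure_singleton v.2
  have huv : ((u + v : ↥(N ⊔ closure {x})) : M) = ↑(y₁ + y₂) + (k₁ + k₂) • x := by
    rw [AddSubmonoid.coe_add, ← hu, ← hv, AddSubmonoid.coe_add, add_nsmul]
    abel
  rw [extendAddNsmul_eq f hle huv, extendAddNsmul_eq f hle hu.symm,
    extendAddNsmul_eq f hle hv.symm, map_add, add_nsmul, add_add_add_comm]

theorem extendAddNsmul_mono {u v : ↥(N ⊔ closure {x})} (huv : (u : M) ≤ v) :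
    extendAddNsmul f x q u ≤ extendAddNsmul f x q v := by
  obtain ⟨⟨y₁, k₁⟩, hu⟩ := exists_add_nsmul_eq_of_mem_sup_closure_singleton u.2
  obtain ⟨⟨y₂, k₂⟩, hv⟩ := exists_add_nsmul_eq_of_mem_sup_closure_singleton v.2
  rw [extendAddNsmul_eq f hle hu.symm, extendAddNsmul_eq f hle hv.symm]
  exact hle _ _ _ _ (hu ▸ hv ▸ huv)

end Compatible

theorem stmt1_general {M : Type*} [AddCommMonoid M] [PartialOrder M] [IsOrderedAddMonoid M] (h0 : ∀ z : M, 0 ≤ z)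
    (N : AddSubmonoid M) (f : N → ℝ≥0)
    (hf0 : f 0 = 0) (hfadd : ∀ u v : N, f (u + v) = f u + f v)
    (x : M) (q : ℝ≥0)
    (hi : ∀ (y₁ y₂ : N) (m : ℕ), 1 ≤ m → ∀ mb : ℕ,
      (y₁ : M) + mb • x ≤ (y₂ : M) + (m + mb) • x → f y₁ ≤ f y₂ + m • q)
    (hii : ∀ (z₁ z₂ : N) (n : ℕ), 1 ≤ n → ∀ nb : ℕ,
      (z₁ : M) + (n + nb) • x ≤ (z₂ : M) + nb • x → f z₁ + n • q ≤ f z₂) :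
    ∃ g : (N ⊔ AddSubmonoid.closure {x} : AddSubmonoid M) → ℝ≥0,
      g 0 = 0 ∧
      (∀ u v : (N ⊔ AddSubmonoid.closure {x} : AddSubmonoid M), g (u + v) = g u + g v) ∧
      (∀ u v : (N ⊔ AddSubmonoid.closure {x} : AddSubmonoid M),
        (u : M) ≤ (v : M) → g u ≤ g v) ∧
      (∀ (y : N) (k : ℕ) (u : (N ⊔ AddSubmonoid.closure {x} : AddSubmonoid M)),
        (u : M) = (y : M) + k • x → g u = f y + k • q) ∧
      (∀ (y : N) (hy : (y : M) ∈ (N ⊔ AddSubmonoid.closure {x} : AddSubmonoid M)),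
        g ⟨y, hy⟩ = f y) ∧
      (∀ hx : x ∈ (N ⊔ AddSubmonoid.closure {x} : AddSubmonoid M), g ⟨x, hx⟩ = q) := by
  let F : N →+ ℝ≥0 := { toFun := f, map_zero' := hf0, map_add' := hfadd }
  have hle : ∀ (y₁ y₂ : N) (k₁ k₂ : ℕ),
      (y₁ : M) + k₁ • x ≤ (y₂ : M) + k₂ • x → F y₁ + k₁ • q ≤ F y₂ + k₂ • q :=
    fun _ _ _ _ ↦ map_add_nsmul_le_of_add_nsmul_le F (h0 x) hi hii
  have hF : ∀ (y : N) (k : ℕ) (u : ↥(N ⊔ closure {x})),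
      (u : M) = y + k • x → extendAddNsmul F x q u = f y + k • q :=
    fun _ _ _ ↦ extendAddNsmul_eq F hle
  refine ⟨extendAddNsmul F x q, ?_, extendAddNsmul_add F hle, fun _ _ ↦ extendAddNsmul_mono F hle,
    hF, fun y hy ↦ ?_, fun hx ↦ ?_⟩
  · simpa [hf0] using hF 0 0 0 (by simp)
  · simpa using hF y 0 ⟨y, hy⟩ (by simp)
  · simpa [hf0] using hF 0 1 ⟨x, hx⟩ (by simp)

/-- Extension of states on submonoids of a positively ordered
monoid.  Given a state `f` on a submonoid `N` of a positively ordered monoid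
`M`, an element `x : M` and a value `q ∈ [0,∞)` satisfying the two
compatibility conditions, the assignment `y + k•x ↦ f y + k•q` is a
well-defined state on the submonoid generated by `N` and `x`; in particular it
extends `f` and takes the value `q` at `x`. -/
theorem stmt1 {M : Type*} [AddCommMonoid M] [PartialOrder M] [IsOrderedAddMonoid M] (h0 : ∀ z : M, 0 ≤ z)
    (N : AddSubmonoid M) (f : N → ℝ≥0)
    (hf0 : f 0 = 0) (hfadd : ∀ u v : N, f (u + v) = f u + f v)
    (hfmono : ∀ u v : N, (u : M) ≤ (v : M) → f u ≤ f v)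
    (x : M) (q : ℝ≥0)
    (hi : ∀ (y₁ y₂ : N) (m : ℕ), 1 ≤ m → ∀ mb : ℕ,
      (y₁ : M) + mb • x ≤ (y₂ : M) + (m + mb) • x → f y₁ ≤ f y₂ + m • q)
    (hii : ∀ (z₁ z₂ : N) (n : ℕ), 1 ≤ n → ∀ nb : ℕ,
      (z₁ : M) + (n + nb) • x ≤ (z₂ : M) + nb • x → f z₁ + n • q ≤ f z₂) :
    ∃ g : (N ⊔ AddSubmonoid.closure {x} : AddSubmonoid M) → ℝ≥0,
      g 0 = 0 ∧
      (∀ u v : (N ⊔ AddSubmonoid.closure {x} : AddSubmonoid M), g (u + v) = g u + g v) ∧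
      (∀ u v : (N ⊔ AddSubmonoid.closure {x} : AddSubmonoid M),
        (u : M) ≤ (v : M) → g u ≤ g v) ∧
      (∀ (y : N) (k : ℕ) (u : (N ⊔ AddSubmonoid.closure {x} : AddSubmonoid M)),
        (u : M) = (y : M) + k • x → g u = f y + k • q) ∧
      (∀ (y : N) (hy : (y : M) ∈ (N ⊔ AddSubmonoid.closure {x} : AddSubmonoid M)),
        g ⟨y, hy⟩ = f y) ∧
      (∀ hx : x ∈ (N ⊔ AddSubmonoid.closure {x} : AddSubmonoid M), g ⟨x, hx⟩ = q) :=
  stmt1_general h0 N f hf0 hfadd x q hi hii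
end

section
/- Let M be a positively ordered monoid. Then M is nearly unperforated if and only if for all a, b ∈ M, the inequalities 2·a ≤ 2·b and 3·a ≤ 3·b together imply a ≤ b. -/
/-! Every `k ≥ 2` is a sum of 2s and 3s, so `2•a ≤ 2•b` and `3•a ≤ 3•b` give `k•a ≤ k•b` for all
`k ≥ 2`. Conversely, if `j•a ≤ j•b` for all `j > k ≥ 1`, then applying the `2, 3` cancellation to
`k•a, k•b` (whose doubles and triples are `2k, 3k > k`) gives `k•a ≤ k•b`; descending induction
brings `k` down to `1`. -/

/-- A positively ordered monoid is nearly unperforated if `a ≤ b` whenever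
`k•a ≤ k•b` for all sufficiently large `k`. -/
def NearlyUnperforated (M : Type*) [AddCommMonoid M] [PartialOrder M] [IsOrderedAddMonoid M] : Prop :=
  ∀ a b : M, (∃ k₀ : ℕ, ∀ k : ℕ, k₀ ≤ k → k • a ≤ k • b) → a ≤ b

theorem Nat.exists_eq_two_mul_add_three_mul {k : ℕ} (hk : 2 ≤ k) : ∃ m n : ℕ, k = 2 * m + 3 * n := by
  rcases Nat.even_or_odd' k with ⟨m, rfl | rfl⟩
  · exact ⟨m, 0, by omega⟩
  · exact ⟨m - 1, 1, by omega⟩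

theorem nsmul_le_nsmul_of_two_nsmul_of_three_nsmul {M : Type*} [AddCommMonoid M] [Preorder M]
    [IsOrderedAddMonoid M] {a b : M} (h2 : 2 • a ≤ 2 • b) (h3 : 3 • a ≤ 3 • b) {k : ℕ}
    (hk : 2 ≤ k) : k • a ≤ k • b := by
  obtain ⟨m, n, rfl⟩ := Nat.exists_eq_two_mul_add_three_mul hk
  simp only [add_nsmul, mul_nsmul]
  exact add_le_add (nsmul_le_nsmul_right h2 m) (nsmul_le_nsmul_right h3 n)

theorem le_of_eventually_nsmul_le_nsmul {M : Type*} [AddMonoid M] [Preorder M]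
    (hcancel : ∀ a b : M, 2 • a ≤ 2 • b → 3 • a ≤ 3 • b → a ≤ b) {a b : M} {k₀ : ℕ}
    (hk₀ : ∀ k, k₀ ≤ k → k • a ≤ k • b) : a ≤ b := by
  suffices h : ∀ j, 1 ≤ j → j • a ≤ j • b by simpa using h 1 le_rfl
  refine Nat.decreasingInduction' (P := fun k ↦ ∀ j, k ≤ j → j • a ≤ j • b)
    (fun k _ hk ih j hj ↦ ?_) (le_max_right k₀ 1) fun j hj ↦ hk₀ j (le_of_max_le_left hj)
  obtain rfl | hkj := hj.eq_or_lt
  · apply hcancel <;> rw [smul_smul, smul_smul]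
    · exact ih (2 * k) (by omega)
    · exact ih (3 * k) (by omega)
  · exact ih j hkj

theorem stmt2_general {M : Type*} [AddCommMonoid M] [PartialOrder M] [IsOrderedAddMonoid M] :
    NearlyUnperforated M ↔
      ∀ a b : M, 2 • a ≤ 2 • b → 3 • a ≤ 3 • b → a ≤ b := by
  constructor
  · intro hnu a b h2 h3
    exact hnu a b ⟨2, fun k hk ↦ nsmul_le_nsmul_of_two_nsmul_of_three_nsmul h2 h3 hk⟩
  · rintro hcancel a b ⟨k₀, hk₀⟩
    exact le_of_eventually_nsmul_le_nsmul hcancel hk₀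

/-- A positively ordered monoid `M` is nearly unperforated
if and only if for all `a b ∈ M`, the inequalities `2•a ≤ 2•b` and
`3•a ≤ 3•b` together imply `a ≤ b`. -/
theorem stmt2 {M : Type*} [AddCommMonoid M] [PartialOrder M] [IsOrderedAddMonoid M] (h0 : ∀ x : M, 0 ≤ x) :
    NearlyUnperforated M ↔
      ∀ a b : M, 2 • a ≤ 2 • b → 3 • a ≤ 3 • b → a ≤ b :=
  stmt2_general
end

section
/- Let M be a positively ordered monoid. Then: (i) if M is unperforated (n·a ≤ n·b for some n ≥ 1 implies a ≤ b), then M is nearly unperforated; (ii) if M is nearly unperforated, then M is almost unperforated; (iii) if M is nearly unperforated, then M is weakly separative, i.e., 2·a ≤ a + b ≤ 2·b implies a ≤ b. -/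
def AlmostUnperforated (M : Type*) [AddCommMonoid M] [PartialOrder M] [IsOrderedAddMonoid M] : Prop :=
  ∀ a b : M, (∃ k : ℕ, (k + 1) • a ≤ k • b) → a ≤ b

section

variable {M : Type*} [AddCommMonoid M] [PartialOrder M] [IsOrderedAddMonoid M]

theorem nsmul_le_nsmul_of_succ_nsmul_le {a b : M} (ha : 0 ≤ a) (hb : 0 ≤ b) {k : ℕ}
    (h : (k + 1) • a ≤ k • b) {m : ℕ} (hm : k * (k + 1) ≤ m) : m • a ≤ m • b := by
  set q := m / (k + 1)
  have hkq : k ≤ q := (Nat.le_div_iff_mul_le k.succ_pos).2 hm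
  have hm_lt : m < (q + 1) * (k + 1) := Nat.lt_mul_of_div_lt (Nat.lt_succ_self q) k.succ_pos
  have hqm : q * (k + 1) ≤ m := Nat.div_mul_le_self m (k + 1)
  calc m • a ≤ ((q + 1) * (k + 1)) • a := nsmul_le_nsmul_left ha hm_lt.le
    _ = (q + 1) • (k + 1) • a := mul_nsmul' a _ _
    _ ≤ (q + 1) • k • b := nsmul_le_nsmul_right h _
    _ = ((q + 1) * k) • b := (mul_nsmul' b _ _).symm
    _ ≤ m • b := nsmul_le_nsmul_left hb (by nlinarith)

theorem succ_nsmul_le_nsmul_add_of_two_nsmul_le_add {a b : M} (h : 2 • a ≤ a + b) :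
    ∀ n : ℕ, (n + 1) • a ≤ n • b + a
  | 0 => by simp
  | n + 1 =>
    calc (n + 1 + 1) • a = (n + 1) • a + a := succ_nsmul a (n + 1)
      _ ≤ n • b + a + a := add_le_add_left (succ_nsmul_le_nsmul_add_of_two_nsmul_le_add h n) a
      _ = n • b + 2 • a := by rw [two_nsmul, add_assoc]
      _ ≤ n • b + (a + b) := add_le_add_right h _
      _ = (n + 1) • b + a := by rw [succ_nsmul]; abel

theorem nsmul_le_nsmul_of_two_nsmul_le_add_of_add_le_two_nsmul {a b : M} (h₁ : 2 • a ≤ a + b)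
    (h₂ : a + b ≤ 2 • b) (n : ℕ) : (n + 2) • a ≤ (n + 2) • b :=
  calc (n + 2) • a = (n + 1) • a + a := succ_nsmul a (n + 1)
    _ ≤ n • b + a + a := add_le_add_left (succ_nsmul_le_nsmul_add_of_two_nsmul_le_add h₁ n) a
    _ = n • b + 2 • a := by rw [two_nsmul, add_assoc]
    _ ≤ n • b + 2 • b := add_le_add_right (h₁.trans h₂) _
    _ = (n + 2) • b := (add_nsmul b n 2).symm

namespace NearlyUnperforated

theorem of_forall_le_of_nsmul_le_nsmul
    (hU : ∀ a b : M, ∀ n : ℕ, 1 ≤ n → n • a ≤ n • b → a ≤ b) : NearlyUnperforated M :=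
  fun a b ⟨k₀, hk⟩ ↦ hU a b (max k₀ 1) (le_max_right _ _) (hk _ (le_max_left _ _))

theorem almostUnperforated (h0 : ∀ x : M, 0 ≤ x) (hN : NearlyUnperforated M) :
    AlmostUnperforated M :=
  fun a b ⟨k, hk⟩ ↦ hN a b
    ⟨k * (k + 1), fun _ hm ↦ nsmul_le_nsmul_of_succ_nsmul_le (h0 a) (h0 b) hk hm⟩

theorem le_of_two_nsmul_le_add_of_add_le_two_nsmul (hN : NearlyUnperforated M) {a b : M}
    (h₁ : 2 • a ≤ a + b) (h₂ : a + b ≤ 2 • b) : a ≤ b := by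
  refine hN a b ⟨2, fun m hm ↦ ?_⟩
  obtain ⟨n, rfl⟩ := Nat.exists_eq_add_of_le' hm
  exact nsmul_le_nsmul_of_two_nsmul_le_add_of_add_le_two_nsmul h₁ h₂ n

end NearlyUnperforated

end

/-- For a positively ordered monoid `M`:
(i) unperforated implies nearly unperforated;
(ii) nearly unperforated implies almost unperforated;
(iii) nearly unperforated implies weakly separative. -/
theorem stmt3 {M : Type*} [AddCommMonoid M] [PartialOrder M] [IsOrderedAddMonoid M] (h0 : ∀ x : M, 0 ≤ x) :
    ((∀ a b : M, ∀ n : ℕ, 1 ≤ n → n • a ≤ n • b → a ≤ b) → NearlyUnperforated M) ∧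
    (NearlyUnperforated M → AlmostUnperforated M) ∧
    (NearlyUnperforated M → ∀ a b : M, 2 • a ≤ a + b → a + b ≤ 2 • b → a ≤ b) :=
  ⟨NearlyUnperforated.of_forall_le_of_nsmul_le_nsmul, NearlyUnperforated.almostUnperforated h0,
    fun hN _ _ ↦ hN.le_of_two_nsmul_le_add_of_add_le_two_nsmul⟩
end

section
/- Let M be a positively ordered monoid that is preminimally ordered, simple, and stably finite, and let a, b, x ∈ M satisfy a + x ≤ b + x. Then there exists k₀ ∈ ℕ such that k·a ≤ k·b for all k ≥ k₀. -/
/-!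
Preminimality turns `a + x ≤ b + x` into `a + y ≤ b + y` for every `y ≥ x`: one copy of `a` may
be traded for one copy of `b` in the presence of anything above `x`. Simplicity gives
`x ≤ n • a` and `x ≤ m • b`, so for `k ≥ n + m` each intermediate sum `i • a + j • b` with
`i + j + 1 = k` dominates `x`, and `k • a` is turned into `k • b` one summand at a time.
When `a ≠ 0`, stable finiteness rules out `b = 0`, since `a + x ≤ x` would give `x = x + a`.
-/

section

variable {M : Type*} [AddCommMonoid M]

theorem nsmul_le_nsmul_of_forall_exchange [Preorder M] {a b : M} {k : ℕ}
    (hex : ∀ i j : ℕ, i + j + 1 = k → a + (i • a + j • b) ≤ b + (i • a + j • b)) :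
    k • a ≤ k • b := by
  suffices key : ∀ j i : ℕ, i + j = k → k • a ≤ i • a + j • b by
    simpa using key k 0 (by omega)
  intro j
  induction j with
  | zero => intro i hi; simp [← hi]
  | succ j ih =>
    intro i hij
    calc k • a ≤ (i + 1) • a + j • b := ih (i + 1) (by omega)
      _ = a + (i • a + j • b) := by rw [succ_nsmul]; abel
      _ ≤ b + (i • a + j • b) := hex i j (by omega)
      _ = i • a + (j + 1) • b := by rw [succ_nsmul]; abel

theorem nsmul_le_nsmul_of_exchange_above [Preorder M] [AddLeftMono M] (h0 : ∀ z : M, 0 ≤ z)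
    {a b x : M} {n m k : ℕ} (hex : ∀ y : M, x ≤ y → a + y ≤ b + y)
    (hn : x ≤ n • a) (hm : x ≤ m • b) (hk : n + m ≤ k) :
    k • a ≤ k • b := by
  refine nsmul_le_nsmul_of_forall_exchange fun i j hij => hex _ ?_
  rcases (by omega : n ≤ i ∨ m ≤ j) with hi | hj
  · exact (hn.trans (nsmul_le_nsmul_left (h0 a) hi)).trans (le_add_of_nonneg_right (h0 _))
  · exact (hm.trans (nsmul_le_nsmul_left (h0 b) hj)).trans (le_add_of_nonneg_left (h0 _))

theorem eq_zero_of_add_le_self [PartialOrder M] [AddLeftMono M] (h0 : ∀ z : M, 0 ≤ z)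
    (hsf : ∀ a x : M, x ≠ 0 → a ≠ a + x) {a x : M} (h : a + x ≤ x) : a = 0 := by
  by_contra ha
  exact hsf x a ha (le_antisymm (le_add_of_nonneg_right (h0 a)) (by rwa [add_comm] at h))

end

/-- Let `M` be a positively ordered monoid that is
preminimally ordered, simple, and stably finite, and let `a b x : M` satisfy
`a + x ≤ b + x`.  Then there exists `k₀` such that `k•a ≤ k•b` for all
`k ≥ k₀`. -/
theorem stmt4 {M : Type*} [AddCommMonoid M] [PartialOrder M] [IsOrderedAddMonoid M] (h0 : ∀ z : M, 0 ≤ z)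
    (hpremin : ∀ a b x y : M, a + x ≤ b + x → x ≤ y → a + y ≤ b + y)
    (hsimple : ∀ a b : M, b ≠ 0 → ∃ n : ℕ, a ≤ n • b)
    (hsf : ∀ a x : M, x ≠ 0 → a ≠ a + x)
    (a b x : M) (h : a + x ≤ b + x) :
    ∃ k₀ : ℕ, ∀ k : ℕ, k₀ ≤ k → k • a ≤ k • b := by
  by_cases ha : a = 0
  · exact ⟨0, fun k _ => by simpa [ha] using h0 (k • b)⟩
  have hb : b ≠ 0 := by
    rintro rfl
    exact ha (eq_zero_of_add_le_self h0 hsf (by simpa using h))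
  obtain ⟨n, hn⟩ := hsimple x a ha
  obtain ⟨m, hm⟩ := hsimple x b hb
  exact ⟨n + m, fun k hk =>
    nsmul_le_nsmul_of_exchange_above h0 (fun y => hpremin a b x y h) hn hm hk⟩
end

section
/- Let M be a commutative monoid equipped with its algebraic order (a ≤ b if and only if there exists c ∈ M with a + c = b), and assume this order is antisymmetric. Assume M is simple (for all a, b ∈ M with b ≠ 0 there exist n ∈ ℕ and c ∈ M with a + c = n·b) and stably finite (a + y = a implies y = 0). Then M is nearly unperforated if and only if M is cancellative (a + x ≤ b + x implies a ≤ b) and almost unperforated. -/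
private lemma iter_lem {M : Type*} [AddCommMonoid M] {e b x : M}
    (h : e + x = b + x) : ∀ k : ℕ, k • e + x = k • b + x := by
  intro k
  induction k with
  | zero => simp
  | succ n ih =>
    calc (n+1) • e + x = (n • e + x) + e := by rw [succ_nsmul]; abel
      _ = (n • b + x) + e := by rw [ih]
      _ = n • b + (e + x) := by abel
      _ = n • b + (b + x) := by rw [h]
      _ = (n+1) • b + x := by rw [succ_nsmul]; abel

private lemma key_lem {M : Type*} [AddCommMonoid M] {e b : M} {N : ℕ}
    (hA : ∀ k : ℕ, k • e + N • b = k • b + N • b) :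
    ∀ j : ℕ, (N + j) • e + (N + j) • b = (N + j) • b + (N + j) • b := by
  intro j
  calc (N+j) • e + (N+j) • b
      = (N • e + N • b) + (j • e + j • b) := by rw [add_nsmul, add_nsmul]; abel
    _ = (N • b + N • b) + (j • e + j • b) := by rw [hA N]
    _ = (j • e + N • b) + (N • b + j • b) := by abel
    _ = (j • b + N • b) + (N • b + j • b) := by rw [hA j]
    _ = (N+j) • b + (N+j) • b := by rw [add_nsmul]; abel

/-- Let `M` be a commutative monoid equipped with its
algebraic order (`a ≤ b` iff `∃ c, a + c = b`), assumed antisymmetric.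
Assume `M` is simple and stably finite.  Then `M` is nearly unperforated if
and only if `M` is cancellative and almost unperforated (all notions with
respect to the algebraic order). -/
theorem stmt5 {M : Type*} [AddCommMonoid M]
    (hanti : ∀ a b : M, (∃ c, a + c = b) → (∃ c, b + c = a) → a = b)
    (hsimple : ∀ a b : M, b ≠ 0 → ∃ (n : ℕ) (c : M), a + c = n • b)
    (hsf : ∀ a y : M, a + y = a → y = 0) :
    -- nearly unperforated
    ((∀ a b : M, (∃ k₀ : ℕ, ∀ k : ℕ, k₀ ≤ k → ∃ c, k • a + c = k • b) → ∃ c, a + c = b) ↔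
      -- cancellative ...
      ((∀ a b x : M, (∃ c, (a + x) + c = b + x) → ∃ c, a + c = b) ∧
        -- ... and almost unperforated
        (∀ a b : M, (∃ (k : ℕ) (c : M), (k + 1) • a + c = k • b) → ∃ c, a + c = b))) := by
  constructor
  · intro hNU
    constructor
    · -- cancellative
      rintro a b x ⟨c, hc⟩
      by_cases hb : b = 0
      · subst hb
        refine ⟨c, hsf x (a + c) ?_⟩
        calc x + (a + c) = a + x + c := by abel
          _ = 0 + x := hc
          _ = x := zero_add x
      · by_cases he : a + c = 0
        · exact ⟨c + b, by rw [← add_assoc, he, zero_add]⟩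
        · obtain ⟨N, d, hd⟩ := hsimple x b hb
          obtain ⟨N', d', hd'⟩ := hsimple x (a + c) he
          obtain ⟨e, hedef⟩ : ∃ e : M, e = a + c := ⟨a + c, rfl⟩
          rw [← hedef] at hd'
          have hex : e + x = b + x := by rw [hedef, ← hc]; abel
          have hiter := iter_lem hex
          have hA : ∀ k : ℕ, k • e + N • b = k • b + N • b := by
            intro k
            calc k • e + N • b = (k • e + x) + d := by rw [← hd]; abel
              _ = (k • b + x) + d := by rw [hiter k]
              _ = k • b + N • b := by rw [← hd]; abel
          have hA' : ∀ k : ℕ, k • b + N' • e = k • e + N' • e := by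
            intro k
            calc k • b + N' • e = (k • b + x) + d' := by rw [← hd']; abel
              _ = (k • e + x) + d' := by rw [← hiter k]
              _ = k • e + N' • e := by rw [← hd']; abel
          have hk1 := key_lem hA
          have hk2 := key_lem hA'
          have heb : e + b = b + b := by
            apply hanti
            · refine hNU _ _ ⟨N, fun k hk => ⟨0, ?_⟩⟩
              obtain ⟨j, rfl⟩ := Nat.exists_eq_add_of_le hk
              rw [add_zero, smul_add, smul_add]
              exact hk1 j
            · refine hNU _ _ ⟨N, fun k hk => ⟨0, ?_⟩⟩
              obtain ⟨j, rfl⟩ := Nat.exists_eq_add_of_le hk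
              rw [add_zero, smul_add, smul_add]
              exact (hk1 j).symm
          have hbe : b + e = e + e := by
            apply hanti
            · refine hNU _ _ ⟨N', fun k hk => ⟨0, ?_⟩⟩
              obtain ⟨j, rfl⟩ := Nat.exists_eq_add_of_le hk
              rw [add_zero, smul_add, smul_add]
              exact hk2 j
            · refine hNU _ _ ⟨N', fun k hk => ⟨0, ?_⟩⟩
              obtain ⟨j, rfl⟩ := Nat.exists_eq_add_of_le hk
              rw [add_zero, smul_add, smul_add]
              exact (hk2 j).symm
          have hee : e + e = b + b := by
            rw [← hbe, add_comm b e, heb]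
          have htwo : ∀ j : ℕ, (2 + j) • e = (2 + j) • b := by
            intro j
            induction j with
            | zero =>
              simpa [two_nsmul] using hee
            | succ n ih =>
              have h1 : 2 + (n + 1) = (2 + n) + 1 := rfl
              rw [h1, succ_nsmul, succ_nsmul, ih]
              have h2 : 2 + n = (1 + n) + 1 := by omega
              calc (2+n) • b + e = (1+n) • b + (e + b) := by rw [h2, succ_nsmul]; abel
                _ = (1+n) • b + (b + b) := by rw [heb]
                _ = (2+n) • b + b := by rw [h2, succ_nsmul]; abel
          obtain ⟨c2, hc2⟩ := hNU e b ⟨2, fun k hk => by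
            obtain ⟨j, rfl⟩ := Nat.exists_eq_add_of_le hk
            exact ⟨0, by rw [add_zero, htwo j]⟩⟩
          exact ⟨c + c2, by rw [← hc2, hedef]; abel⟩
    · -- almost unperforated
      rintro a b ⟨k, c, hc⟩
      apply hNU
      refine ⟨(k+1)*(k+1)*(k+1), fun j hj => ?_⟩
      have hpos : 0 < k + 1 := Nat.succ_pos k
      set q := j / (k+1) with hqdef
      set r := j % (k+1) with hrdef
      have hjqr : (k+1) * q + r = j := Nat.div_add_mod j (k+1)
      have hrlt : r < k + 1 := Nat.mod_lt _ hpos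
      have hqge : (k+1)*(k+1) ≤ q := (Nat.le_div_iff_mul_le hpos).2 hj
      have hrk : r * k ≤ q := by
        calc r * k ≤ (k+1) * (k+1) := Nat.mul_le_mul (by omega) (by omega)
          _ ≤ q := hqge
      have hkey : (q + r) * k ≤ j := by
        calc (q+r)*k = q*k + r*k := by ring
          _ ≤ q*k + q := Nat.add_le_add_left hrk _
          _ = (k+1)*q := by ring
          _ ≤ j := Nat.le.intro hjqr
      have e3 : a + (k • a + c) = k • b := by
        rw [← hc, succ_nsmul]; abel
      refine ⟨q • c + r • (k • a + c) + (j - (q+r)*k) • b, ?_⟩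
      have hj' : q * (k+1) + r = j := by rw [Nat.mul_comm]; exact hjqr
      have hsplit : j • a = q • ((k+1) • a) + r • a := by
        calc j • a = (q*(k+1) + r) • a := by rw [hj']
          _ = (q*(k+1)) • a + r • a := add_smul _ _ _
          _ = q • ((k+1) • a) + r • a := by rw [mul_smul]
      calc j • a + (q • c + r • (k • a + c) + (j - (q+r)*k) • b)
          = (q • ((k+1) • a) + q • c) + (r • a + r • (k • a + c)) + (j - (q+r)*k) • b := by
            rw [hsplit]; abel
        _ = q • ((k+1) • a + c) + r • (a + (k • a + c)) + (j - (q+r)*k) • b := by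
            simp only [smul_add]
            try abel
        _ = q • (k • b) + r • (k • b) + (j - (q+r)*k) • b := by rw [hc, e3]
        _ = (q*k) • b + (r*k) • b + (j - (q+r)*k) • b := by rw [mul_smul, mul_smul]
        _ = (q*k + r*k + (j - (q+r)*k)) • b := by rw [add_smul, add_smul]
        _ = j • b := by
            congr 1
            have h5 : q*k + r*k = (q+r)*k := by ring
            rw [h5]
            exact Nat.add_sub_cancel' hkey
  · rintro ⟨hcanc, hAU⟩ a b ⟨k₀, hk⟩
    obtain ⟨K, hK⟩ : ∃ K : ℕ, K = k₀ + 1 := ⟨k₀ + 1, rfl⟩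
    obtain ⟨u, hu⟩ := hk K (by omega)
    obtain ⟨v, hv⟩ := hk (K+1) (by omega)
    have h3 : (2*K+2) • u + (2*K*(K+1)) • a = (2*K*(K+1)) • b := by
      have h : (2*K+2) • (K • a + u) = (2*K+2) • (K • b) := by rw [hu]
      rw [smul_add, ← mul_smul, ← mul_smul] at h
      have hco : (2*K+2)*K = 2*K*(K+1) := by ring
      rw [hco] at h
      rw [add_comm]
      exact h
    have h4 : (2*K) • v + (2*K*(K+1)) • a = (2*K*(K+1)) • b := by
      have h : (2*K) • ((K+1) • a + v) = (2*K) • ((K+1) • b) := by rw [hv]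
      rw [smul_add, ← mul_smul, ← mul_smul] at h
      rw [add_comm]
      exact h
    have hbig : (2*K+2) • u + (2*K*(K+1)) • a = (2*K) • v + (2*K*(K+1)) • a :=
      h3.trans h4.symm
    obtain ⟨c1, hc1⟩ := hcanc ((2*K+2) • u) ((2*K) • v) ((2*K*(K+1)) • a)
      ⟨0, by rw [add_zero]; exact hbig⟩
    have huv := hAU u v ⟨2*K, u + c1, by
      calc (2*K+1) • u + (u + c1) = (2*K+2) • u + c1 := by
            conv_rhs => rw [show (2*K+2) = (2*K+1)+1 by omega, succ_nsmul]
            rw [add_assoc]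
        _ = (2*K) • v := hc1⟩
    obtain ⟨w, hw⟩ := huv
    obtain ⟨c2, hc2⟩ := hcanc (a + v) (u + b) (K • a) ⟨0, by
      rw [add_zero]
      calc (a + v) + K • a = (K+1) • a + v := by rw [succ_nsmul]; abel
        _ = (K+1) • b := hv
        _ = K • b + b := by rw [succ_nsmul]
        _ = (K • a + u) + b := by rw [hu]
        _ = (u + b) + K • a := by abel⟩
    obtain ⟨c3, hc3⟩ := hcanc (a + (w + c2)) b u ⟨0, by
      rw [add_zero]
      calc (a + (w + c2)) + u = (a + (u + w)) + c2 := by abel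
        _ = (a + v) + c2 := by rw [hw]
        _ = u + b := hc2
        _ = b + u := add_comm u b⟩
    exact ⟨w + c2 + c3, by rw [← hc3]; abel⟩
end

section
/- Let R be a commutative unital semiring which is conical (x + y = 0 implies x = 0 and y = 0), nonelementary (there exist nonzero s, t ∈ R with 1 = s + t), and simple for its algebraic pre-order (for all x, y ∈ R with y ≠ 0 there exist n ∈ ℕ and c ∈ R with x + c = n·y). Then R is weakly divisible: for every s ∈ R there exist a, b ∈ R with s = 2·a + 3·b. -/
open Finset

private lemma nat_split_23 (C : ℕ) (hC : 2 ≤ C) : ∃ x y : ℕ, C = 2 * x + 3 * y := by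
  obtain ⟨k, hk | hk⟩ := Nat.even_or_odd' C
  · exact ⟨k, 0, by omega⟩
  · exact ⟨k - 1, 1, by omega⟩

/-- Let `R` be a commutative unital semiring that is conical,
nonelementary, and simple for its algebraic pre-order.  Then `R` is weakly
divisible: every `s ∈ R` can be written as `s = 2•a + 3•b`. -/
theorem stmt7 {R : Type*} [CommSemiring R]
    (hconical : ∀ x y : R, x + y = 0 → x = 0 ∧ y = 0)
    (hnonelem : ∃ s t : R, s ≠ 0 ∧ t ≠ 0 ∧ (1 : R) = s + t)
    (hsimple : ∀ x y : R, y ≠ 0 → ∃ (n : ℕ) (c : R), x + c = n • y) :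
    ∀ s : R, ∃ a b : R, s = 2 • a + 3 • b := by
  classical
  obtain ⟨u, v, hu, hv, huv⟩ := hnonelem
  obtain ⟨n, c, hnc⟩ := hsimple u v hv
  obtain ⟨m, d, hmd⟩ := hsimple v u hu
  rw [nsmul_eq_mul] at hnc hmd
  set M : ℕ := 2 * (n + m) with hM
  set f : ℕ → R := fun i => u ^ i * v ^ (M + 4 - i) * ((M + 4).choose i : R) with hf
  -- D-closure lemmas
  have hDadd : ∀ x y : R, (∃ a b : R, x = a + a + (b + b + b)) →
      (∃ a b : R, y = a + a + (b + b + b)) →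
      ∃ a b : R, x + y = a + a + (b + b + b) := by
    rintro x y ⟨a1, b1, rfl⟩ ⟨a2, b2, rfl⟩
    exact ⟨a1 + a2, b1 + b2, by ring⟩
  have hDzero : ∃ a b : R, (0 : R) = a + a + (b + b + b) := ⟨0, 0, by ring⟩
  have hDmid : ∀ (μ : R) (C : ℕ), 2 ≤ C → ∃ a b : R, μ * (C : R) = a + a + (b + b + b) := by
    intro μ C hC
    obtain ⟨x, y, rfl⟩ := nat_split_23 C hC
    exact ⟨μ * (x : R), μ * (y : R), by push_cast; ring⟩
  -- binomial expansion
  have hpow : (1 : R) = ∑ i ∈ range (M + 5), f i := by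
    calc (1 : R) = (u + v) ^ (M + 4) := by rw [← huv, one_pow]
    _ = ∑ i ∈ range (M + 5), f i := by rw [add_pow]
  have h1 : ∑ i ∈ range (M + 5), f i = (∑ i ∈ range (M + 4), f i) + f (M + 4) :=
    sum_range_succ f (M + 4)
  have h2 : ∑ i ∈ range (M + 4), f i = (∑ i ∈ range (M + 3), f i) + f (M + 3) :=
    sum_range_succ f (M + 3)
  have h3 : ∑ i ∈ range (M + 3), f i = (∑ i ∈ range (M + 2), f (i + 1)) + f 0 :=
    sum_range_succ' f (M + 2)
  have h4 : ∑ i ∈ range (M + 2), f (i + 1)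
      = (∑ i ∈ range (M + 1), f (i + 1 + 1)) + f (0 + 1) :=
    sum_range_succ' (fun i => f (i + 1)) (M + 1)
  -- special values
  have hfK : f (M + 4) = u ^ (M + 4) := by
    simp only [hf]
    rw [Nat.sub_self, pow_zero, Nat.choose_self]
    push_cast; ring
  have hfK1 : f (M + 3) = u ^ (M + 3) * v * ((M + 4 : ℕ) : R) := by
    simp only [hf]
    have h : M + 4 - (M + 3) = 1 := by omega
    rw [h, pow_one, Nat.choose_succ_self_right]
  have hf1 : f 1 = u * v ^ (M + 3) * ((M + 4 : ℕ) : R) := by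
    simp only [hf]
    have h : M + 4 - 1 = M + 3 := by omega
    rw [h, pow_one, Nat.choose_one_right]
  have hf0 : f 0 = v ^ (M + 4) := by
    simp only [hf]
    rw [Nat.sub_zero, pow_zero, Nat.choose_zero_right]
    push_cast; ring
  -- D for the top pair
  have hDtop : ∃ a b : R, f (M + 3) + f (M + 4) = a + a + (b + b + b) := by
    refine ⟨u ^ (M + 3) * c + ((m : R) + 2) * (u ^ (M + 3) * v), u ^ (M + 4), ?_⟩
    rw [hfK, hfK1]
    have hcast : ((M + 4 : ℕ) : R) = 2 * (n : R) + (2 * (m : R) + 4) := by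
      rw [hM]; push_cast; ring
    rw [hcast]
    calc u ^ (M + 3) * v * (2 * (n : R) + (2 * (m : R) + 4)) + u ^ (M + 4)
        = 2 * (u ^ (M + 3) * ((n : R) * v))
          + ((2 * (m : R) + 4) * (u ^ (M + 3) * v) + u ^ (M + 4)) := by ring
    _ = 2 * (u ^ (M + 3) * (u + c))
          + ((2 * (m : R) + 4) * (u ^ (M + 3) * v) + u ^ (M + 4)) := by rw [← hnc]
    _ = u ^ (M + 3) * c + ((m : R) + 2) * (u ^ (M + 3) * v)
          + (u ^ (M + 3) * c + ((m : R) + 2) * (u ^ (M + 3) * v))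
          + (u ^ (M + 4) + u ^ (M + 4) + u ^ (M + 4)) := by ring
  -- D for the bottom pair
  have hDbot : ∃ a b : R, f (0 + 1) + f 0 = a + a + (b + b + b) := by
    refine ⟨v ^ (M + 3) * d + ((n : R) + 2) * (u * v ^ (M + 3)), v ^ (M + 4), ?_⟩
    rw [show (0 + 1 : ℕ) = 1 from rfl, hf1, hf0]
    have hcast : ((M + 4 : ℕ) : R) = 2 * (m : R) + (2 * (n : R) + 4) := by
      rw [hM]; push_cast; ring
    rw [hcast]
    calc u * v ^ (M + 3) * (2 * (m : R) + (2 * (n : R) + 4)) + v ^ (M + 4)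
        = 2 * (v ^ (M + 3) * ((m : R) * u))
          + ((2 * (n : R) + 4) * (u * v ^ (M + 3)) + v ^ (M + 4)) := by ring
    _ = 2 * (v ^ (M + 3) * (v + d))
          + ((2 * (n : R) + 4) * (u * v ^ (M + 3)) + v ^ (M + 4)) := by rw [← hmd]
    _ = v ^ (M + 3) * d + ((n : R) + 2) * (u * v ^ (M + 3))
          + (v ^ (M + 3) * d + ((n : R) + 2) * (u * v ^ (M + 3)))
          + (v ^ (M + 4) + v ^ (M + 4) + v ^ (M + 4)) := by ring
  -- D for the middle sum
  have hDmidsum : ∃ a b : R,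
      (∑ i ∈ range (M + 1), f (i + 1 + 1)) = a + a + (b + b + b) := by
    refine Finset.sum_induction _ (fun x => ∃ a b : R, x = a + a + (b + b + b))
      (fun x y hx hy => hDadd x y hx hy) hDzero ?_
    intro i hi
    have hi' : i < M + 1 := mem_range.mp hi
    have hchoose : 2 ≤ (M + 4).choose (i + 2) := by
      have hA : 0 < (M + 3).choose (i + 1) := Nat.choose_pos (by omega)
      have hB : 0 < (M + 3).choose (i + 2) := Nat.choose_pos (by omega)
      have hP : (M + 4).choose (i + 2)
          = (M + 3).choose (i + 1) + (M + 3).choose (i + 2) :=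
        Nat.choose_succ_succ (M + 3) (i + 1)
      omega
    have := hDmid (u ^ (i + 1 + 1) * v ^ (M + 4 - (i + 1 + 1))) ((M + 4).choose (i + 1 + 1))
      (by exact hchoose)
    simpa only [hf] using this
  -- assemble
  have hbig : ∃ a b : R, (1 : R) = a + a + (b + b + b) := by
    obtain ⟨a1, b1, e1⟩ := hDmidsum
    obtain ⟨a2, b2, e2⟩ := hDbot
    obtain ⟨a3, b3, e3⟩ := hDtop
    refine ⟨a1 + a2 + a3, b1 + b2 + b3, ?_⟩
    calc (1 : R) = ∑ i ∈ range (M + 5), f i := hpow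
    _ = ((((∑ i ∈ range (M + 1), f (i + 1 + 1)) + f (0 + 1)) + f 0) + f (M + 3)) + f (M + 4) := by
        rw [h1, h2, h3, h4]
    _ = ((∑ i ∈ range (M + 1), f (i + 1 + 1)) + (f (0 + 1) + f 0)) + (f (M + 3) + f (M + 4)) := by
        ring
    _ = _ := by rw [e1, e2, e3]; ring
  intro s
  obtain ⟨a, b, hab⟩ := hbig
  refine ⟨s * a, s * b, ?_⟩
  calc s = s * 1 := (mul_one s).symm
  _ = s * (a + a + (b + b + b)) := by rw [← hab]
  _ = 2 • (s * a) + 3 • (s * b) := by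
      rw [nsmul_eq_mul, nsmul_eq_mul]; push_cast; ring
end

section
/- Let R be a commutative unital semiring that is weakly divisible, i.e., there exist s, t ∈ R with 1 = 2·s + 3·t. Let M be a positively ordered monoid that is a module over R such that scalar multiplication is order-preserving in the module variable: a ≤ b implies r•a ≤ r•b for all r ∈ R. Then M is nearly unperforated. -/
/-!
Raising `1 = 2•s + 3•t` to the `n`-th power writes `1` as a sum of terms `N • x` whose integer
coefficients `N = 2^i 3^(n-i) (n choose i)` are all at least `2^n`. For `n` large these are
past the threshold `k₀`, so `N • a ≤ N • b`; scaling by `x` and summing gives `1 • a ≤ 1 • b`.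
-/

open Finset

theorem nsmul_add_nsmul_pow {R : Type*} [CommSemiring R] (p q : ℕ) (s t : R) (n : ℕ) :
    (p • s + q • t) ^ n =
      ∑ i ∈ range (n + 1), (p ^ i * q ^ (n - i) * n.choose i) • (s ^ i * t ^ (n - i)) := by
  rw [add_pow]
  refine sum_congr rfl fun i _ => ?_
  simp only [nsmul_eq_mul, Nat.cast_mul, Nat.cast_pow]
  ring

theorem two_pow_le_pow_mul_pow_mul_choose {p q n i : ℕ} (hp : 2 ≤ p) (hq : 2 ≤ q) (hi : i ≤ n) :
    2 ^ n ≤ p ^ i * q ^ (n - i) * n.choose i :=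
  calc 2 ^ n = 2 ^ i * 2 ^ (n - i) := by rw [← pow_add, Nat.add_sub_cancel' hi]
    _ ≤ p ^ i * q ^ (n - i) := Nat.mul_le_mul (Nat.pow_le_pow_left hp _) (Nat.pow_le_pow_left hq _)
    _ ≤ p ^ i * q ^ (n - i) * n.choose i := Nat.le_mul_of_pos_right _ (Nat.choose_pos hi)

theorem le_of_sum_nsmul_eq_one {R : Type*} [CommSemiring R] {M : Type*} [AddCommMonoid M]
    [PartialOrder M] [IsOrderedAddMonoid M] [Module R M]
    (hsmul_mono : ∀ (r : R) (a b : M), a ≤ b → r • a ≤ r • b)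
    {ι : Type*} (I : Finset ι) (c : ι → ℕ) (x : ι → R) (h1 : ∑ i ∈ I, c i • x i = 1)
    {a b : M} (hab : ∀ i ∈ I, c i • a ≤ c i • b) : a ≤ b := by
  have hscale : ∀ (i : ι) (m : M), (c i • x i) • m = x i • c i • m := fun i m => by
    rw [smul_assoc, smul_comm]
  calc a = (∑ i ∈ I, c i • x i) • a := by rw [h1, one_smul]
    _ = ∑ i ∈ I, x i • c i • a := by simp only [sum_smul, hscale]
    _ ≤ ∑ i ∈ I, x i • c i • b := sum_le_sum fun i hi => hsmul_mono _ _ _ (hab i hi)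
    _ = (∑ i ∈ I, c i • x i) • b := by simp only [sum_smul, hscale]
    _ = b := by rw [h1, one_smul]

theorem stmt9_general {R : Type*} [CommSemiring R] {M : Type*} [AddCommMonoid M] [PartialOrder M] [IsOrderedAddMonoid M]
    [Module R M]
    (hwd : ∃ s t : R, (1 : R) = 2 • s + 3 • t)
    (hsmul_mono : ∀ (r : R) (a b : M), a ≤ b → r • a ≤ r • b) :
    ∀ a b : M, (∃ k₀ : ℕ, ∀ k : ℕ, k₀ ≤ k → k • a ≤ k • b) → a ≤ b := by
  rintro a b ⟨k₀, hk⟩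
  obtain ⟨s, t, hst⟩ := hwd
  refine le_of_sum_nsmul_eq_one hsmul_mono (range (k₀ + 1))
    (fun i => 2 ^ i * 3 ^ (k₀ - i) * k₀.choose i) (fun i => s ^ i * t ^ (k₀ - i)) ?_
    fun i hi => hk _ ?_
  · rw [← nsmul_add_nsmul_pow, ← hst, one_pow]
  · exact Nat.lt_two_pow_self.le.trans <|
      two_pow_le_pow_mul_pow_mul_choose le_rfl (by norm_num) (mem_range_succ_iff.mp hi)

/-- Let `R` be a weakly divisible commutative unital semiring
(there are `s t ∈ R` with `1 = 2•s + 3•t`), and let `M` be a positively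
ordered monoid that is a module over `R` with order-preserving scalar
multiplication.  Then `M` is nearly unperforated. -/
theorem stmt9 {R : Type*} [CommSemiring R] {M : Type*} [AddCommMonoid M] [PartialOrder M] [IsOrderedAddMonoid M]
    [Module R M] (h0 : ∀ z : M, 0 ≤ z)
    (hwd : ∃ s t : R, (1 : R) = 2 • s + 3 • t)
    (hsmul_mono : ∀ (r : R) (a b : M), a ≤ b → r • a ≤ r • b) :
    ∀ a b : M, (∃ k₀ : ℕ, ∀ k : ℕ, k₀ ≤ k → k • a ≤ k • b) → a ≤ b :=
  stmt9_general hwd hsmul_mono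
end

section
/- Let S be a Cu-semigroup and let a ∈ S. Then the following are equivalent: (1) for all m, n ∈ ℕ one has m·a ≤ n·a if and only if m ≤ n, and furthermore there exist l, L ∈ ℕ and x ∈ S such that x ≪ l·a and (k·L)·x ≤ k·a fails for every k ≥ 1; (2) there exists a functional λ on S with λ(a) = 1. -/
open scoped ENNReal

/-- The (sequential) way-below relation: `a ≪ b` if for every increasing
sequence `f` with a supremum `s` such that `b ≤ s`, some `f n` dominates `a`. -/
def CuWayBelow {S : Type*} [Preorder S] (a b : S) : Prop :=
  ∀ f : ℕ → S, Monotone f → ∀ s : S, IsLUB (Set.range f) s → b ≤ s → ∃ n : ℕ, a ≤ f n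

/-- An abstract Cu-semigroup: a positively ordered monoid satisfying the
axioms (O1)-(O4). -/
structure IsCuSemigroup (S : Type*) [AddCommMonoid S] [PartialOrder S] : Prop where
  /-- addition is order-preserving -/
  add_le_add : ∀ a b c : S, a ≤ b → a + c ≤ b + c
  /-- `0` is the least element -/
  zero_le : ∀ a : S, 0 ≤ a
  /-- (O1) every increasing sequence has a supremum -/
  O1 : ∀ f : ℕ → S, Monotone f → ∃ s : S, IsLUB (Set.range f) s
  /-- (O2) every element is the supremum of a rapidly increasing sequence -/
  O2 : ∀ a : S, ∃ f : ℕ → S, (∀ n : ℕ, CuWayBelow (f n) (f (n + 1))) ∧ IsLUB (Set.range f) a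
  /-- (O3) way-below is additive -/
  O3 : ∀ a' a b' b : S, CuWayBelow a' a → CuWayBelow b' b → CuWayBelow (a' + b') (a + b)
  /-- (O4) suprema of increasing sequences are additive -/
  O4 : ∀ f g : ℕ → S, Monotone f → Monotone g → ∀ s t : S, IsLUB (Set.range f) s →
    IsLUB (Set.range g) t → IsLUB (Set.range (fun n => f n + g n)) (s + t)

/-- A functional on a Cu-semigroup: an additive, order-preserving map to
`[0,∞]` preserving `0` and suprema of increasing sequences. -/
structure IsCuFunctional {S : Type*} [AddCommMonoid S] [PartialOrder S] (l : S → ℝ≥0∞) : Prop where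
  map_zero : l 0 = 0
  map_add : ∀ a b : S, l (a + b) = l a + l b
  mono : ∀ a b : S, a ≤ b → l a ≤ l b
  map_lub : ∀ f : ℕ → S, Monotone f → ∀ s : S, IsLUB (Set.range f) s → l s = ⨆ n : ℕ, l (f n)

/-!
(2) ⇒ (1): a functional with `λ a = 1` reads `m • a ≤ n • a` as `m ≤ n`, and an element `x ≪ a`
of an (O2)-sequence for `a` with `λ x > 1/2` satisfies `(2 * k) • x ≰ k • a`.

(1) ⇒ (2): let `G` be the Grothendieck group of the ideal `{s | s ≤ n • a for some n}`, preordered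
by the cone of differences `t - s` with `s ≤ t`. There `a` is an order unit and
`p g = inf {m / n | n • g ≤ m • a}` is subadditive and homogeneous. The hypothesis on `x` gives
`p x ≥ 1 / L`: an inequality `n • x + e ≤ m • a + e` with `n > L * m` can be iterated until it
absorbs `e` and contradicts `(k * L) • x ≰ k • a`. Hahn–Banach for abelian groups yields an additive
`f ≤ p` with `f x = p x`; it is positive with `f a ≤ 1`, and extended by `∞` off the ideal it is a
monotone additive map `d` with `d a ≤ 1` and `d x > 0`. Its lower regularisation
`b ↦ sup {d c | c ≪ b}` is a functional by (O2)–(O4), finite at `a`, and nonzero at `a` because it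
dominates `d x` at `l • a`; normalise it at `a`.
-/

open scoped Pointwise
open Algebra (GrothendieckAddGroup)
open Algebra.GrothendieckAddGroup (of)

section HahnBanach

variable {G : Type*} [AddCommGroup G] {p : G → ℝ}

lemma map_nsmul_le_of_subadditive (hp : ∀ g h, p (g + h) ≤ p g + p h) {n : ℕ} (hn : 0 < n)
    (g : G) : p (n • g) ≤ n * p g := by
  induction n, hn using Nat.le_induction with
  | base => simp
  | succ n _ ih =>
    rw [succ_nsmul]
    push_cast
    linarith [hp (n • g) g]

lemma exists_graph_extension (hp : ∀ g h, p (g + h) ≤ p g + p h) (Γ : AddSubgroup (G × ℝ))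
    (hΓ : ∀ u ∈ Γ, u.2 ≤ p u.1) (b : G) :
    ∃ α : ℝ, ∀ u ∈ Γ, ∀ z : ℤ, u.2 + z * α ≤ p (u.1 + z • b) := by
  set A : Set ℝ := {t | ∃ v ∈ Γ, ∃ m : ℕ, 0 < m ∧ t = (v.2 - p (v.1 - m • b)) / m}
  -- The lower bounds in `A` lie below the upper bounds because `n • v + m • u ∈ Γ`.
  have le_upper : ∀ u ∈ Γ, ∀ n : ℕ, 0 < n → ∀ t ∈ A, t ≤ (p (u.1 + n • b) - u.2) / n := by
    rintro u hu n hn t ⟨v, hv, m, hm, rfl⟩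
    have hsplit : n • v.1 + m • u.1 = n • (v.1 - m • b) + m • (u.1 + n • b) := by
      rw [smul_sub, smul_add, smul_smul, smul_smul, mul_comm]
      abel
    have h1 : n * v.2 + m * u.2 ≤ p (n • v.1 + m • u.1) := by
      simpa using hΓ _ (add_mem (nsmul_mem hv n) (nsmul_mem hu m))
    have h2 : p (n • v.1 + m • u.1) ≤ n * p (v.1 - m • b) + m * p (u.1 + n • b) := by
      rw [hsplit]
      exact (hp _ _).trans (add_le_add (map_nsmul_le_of_subadditive hp hn _)
        (map_nsmul_le_of_subadditive hp hm _))
    rw [div_le_div_iff₀ (by positivity) (by positivity)]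
    linarith
  have hA : A.Nonempty := ⟨_, 0, zero_mem Γ, 1, one_pos, rfl⟩
  have hAbdd : BddAbove A := ⟨_, le_upper 0 (zero_mem Γ) 1 one_pos⟩
  refine ⟨sSup A, fun u hu z => ?_⟩
  obtain ⟨n, hz⟩ := Int.eq_nat_or_neg z
  rcases n.eq_zero_or_pos with rfl | hn
  · obtain rfl : z = 0 := by omega
    simpa using hΓ u hu
  have hn' : (0 : ℝ) < n := by exact_mod_cast hn
  rcases hz with rfl | rfl
  · have h := csSup_le hA (le_upper u hu n hn)
    rw [le_div_iff₀ hn'] at h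
    simp only [Int.cast_natCast, natCast_zsmul]
    linarith
  · have h := le_csSup hAbdd ⟨u, hu, n, hn, rfl⟩
    rw [div_le_iff₀ hn'] at h
    simp only [Int.cast_neg, Int.cast_natCast, neg_smul, natCast_zsmul, ← sub_eq_add_neg]
    linarith

theorem exists_addMonoidHom_le_of_subadditive (hp : ∀ g h, p (g + h) ≤ p g + p h)
    (hsmul : ∀ (n : ℕ) (g : G), p (n • g) = n * p g) (x : G) :
    ∃ f : G →+ ℝ, (∀ g, f g ≤ p g) ∧ f x = p x := by
  have p_zero : p 0 = 0 := by simpa using hsmul 0 0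
  have neg_le : ∀ g, -p g ≤ p (-g) := fun g => by
    have := hp g (-g)
    rw [add_neg_cancel, p_zero] at this
    linarith
  -- `f` is read off a maximal subgroup of `G × ℝ` below the graph of `p` through `(x, p x)`.
  set good : Set (AddSubgroup (G × ℝ)) := {Γ | (∀ u ∈ Γ, u.2 ≤ p u.1) ∧ (x, p x) ∈ Γ}
  have start : AddSubgroup.zmultiples (x, p x) ∈ good := by
    refine ⟨fun u hu => ?_, AddSubgroup.mem_zmultiples _⟩
    obtain ⟨z, rfl⟩ := AddSubgroup.mem_zmultiples_iff.1 hu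
    obtain ⟨n, rfl | rfl⟩ := Int.eq_nat_or_neg z
    · simp [hsmul]
    · simpa [hsmul] using neg_le (n • x)
  have chains : ∀ c ⊆ good, IsChain (· ≤ ·) c → ∀ Γ ∈ c, ∃ ub ∈ good, ∀ Δ ∈ c, Δ ≤ ub := by
    intro c hc hchain Γ hΓ
    refine ⟨sSup c, ⟨fun u hu => ?_, le_sSup hΓ (hc hΓ).2⟩, fun Δ hΔ => le_sSup hΔ⟩
    obtain ⟨Δ, hΔ, huΔ⟩ := (AddSubgroup.mem_sSup_of_directedOn ⟨Γ, hΓ⟩ hchain.directedOn).1 hu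
    exact (hc hΔ).1 u huΔ
  obtain ⟨Γ, -, ⟨hΓ, hxΓ⟩, hmax⟩ := zorn_le_nonempty₀ good chains _ start
  have total : ∀ b, ∃ r, (b, r) ∈ Γ := by
    intro b
    obtain ⟨α, hα⟩ := exists_graph_extension hp Γ hΓ b
    have hext : Γ ⊔ AddSubgroup.zmultiples (b, α) ∈ good := by
      refine ⟨fun w hw => ?_, AddSubgroup.mem_sup_left hxΓ⟩
      obtain ⟨u, hu, _, ⟨z, rfl⟩, rfl⟩ := AddSubgroup.mem_sup.1 hw
      simpa using hα u hu z
    exact ⟨α, hmax hext le_sup_left (AddSubgroup.mem_sup_right (AddSubgroup.mem_zmultiples _))⟩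
  have unique : ∀ g r s, (g, r) ∈ Γ → (g, s) ∈ Γ → r = s := by
    intro g r s hr hs
    have h1 := hΓ _ (sub_mem hr hs)
    have h2 := hΓ _ (sub_mem hs hr)
    simp only [Prod.mk_sub_mk, sub_self, p_zero] at h1 h2
    linarith
  choose f hf using total
  exact ⟨AddMonoidHom.mk' f fun g h => unique _ _ _ (hf (g + h)) (add_mem (hf g) (hf h)),
    fun g => hΓ _ (hf g), unique _ _ _ (hf x) hxΓ⟩

end HahnBanach

section OrderUnit

variable {G : Type*} [AddCommGroup G] {P : AddSubmonoid G} {u : G}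

def IsOrderUnit (P : AddSubmonoid G) (u : G) : Prop :=
  ∀ g, ∃ m : ℕ, m • u - g ∈ P

-- `m • u - n • g ∈ P` says `n • g ≤ m • u` in the preorder with positive cone `P`.
variable (P u) in
def unitRatios (g : G) : Set ℝ := {r | ∃ m n : ℕ, 0 < n ∧ m • u - n • g ∈ P ∧ r = m / n}

variable (P u) in
noncomputable def unitBound (g : G) : ℝ := sInf (unitRatios P u g)

lemma IsOrderUnit.unitRatios_nonempty (hu : IsOrderUnit P u) (g : G) :
    (unitRatios P u g).Nonempty :=
  let ⟨m, hm⟩ := hu g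
  ⟨m, m, 1, one_pos, by simpa using hm, by simp⟩

lemma nonneg_of_mem_unitRatios {g : G} {r : ℝ} (hr : r ∈ unitRatios P u g) : 0 ≤ r := by
  obtain ⟨m, n, -, -, rfl⟩ := hr
  positivity

lemma bddBelow_unitRatios (g : G) : BddBelow (unitRatios P u g) :=
  ⟨0, fun _ => nonneg_of_mem_unitRatios⟩

lemma unitBound_nonneg (g : G) : 0 ≤ unitBound P u g :=
  Real.sInf_nonneg fun _ => nonneg_of_mem_unitRatios

lemma unitBound_le {g : G} {m n : ℕ} (hn : 0 < n) (h : m • u - n • g ∈ P) :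
    unitBound P u g ≤ m / n :=
  csInf_le (bddBelow_unitRatios g) ⟨m, n, hn, h, rfl⟩

lemma IsOrderUnit.le_unitBound (hu : IsOrderUnit P u) {g : G} {r : ℝ}
    (h : ∀ m n : ℕ, 0 < n → m • u - n • g ∈ P → r ≤ m / n) : r ≤ unitBound P u g :=
  le_csInf (hu.unitRatios_nonempty g) fun _ ⟨m, n, hn, hmn, hr⟩ => hr ▸ h m n hn hmn

lemma IsOrderUnit.unitBound_add_le (hu : IsOrderUnit P u) (g h : G) :
    unitBound P u (g + h) ≤ unitBound P u g + unitBound P u h := by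
  unfold unitBound
  rw [← csInf_add (hu.unitRatios_nonempty g) (bddBelow_unitRatios g)
    (hu.unitRatios_nonempty h) (bddBelow_unitRatios h)]
  refine le_csInf ((hu.unitRatios_nonempty g).add (hu.unitRatios_nonempty h)) ?_
  rintro _ ⟨_, ⟨m, n, hn, hg, rfl⟩, _, ⟨m', n', hn', hh, rfl⟩, rfl⟩
  have hmem : (n' * m + n * m') • u - (n * n') • (g + h) ∈ P := by
    convert add_mem (nsmul_mem hg n') (nsmul_mem hh n) using 1
    simp only [smul_sub, smul_add, add_smul, smul_smul, mul_comm n n']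
    abel
  calc unitBound P u (g + h) ≤ ((n' * m + n * m' : ℕ) : ℝ) / (n * n' : ℕ) :=
        unitBound_le (by positivity) hmem
    _ = m / n + m' / n' := by push_cast; field_simp

lemma unitRatios_nsmul {k : ℕ} (hk : 0 < k) (g : G) :
    unitRatios P u (k • g) = (k : ℝ) • unitRatios P u g := by
  ext r
  constructor
  · rintro ⟨m, n, hn, h, rfl⟩
    refine ⟨m / (n * k : ℕ), ⟨m, n * k, by positivity, by rwa [← smul_smul], rfl⟩, ?_⟩
    dsimp only
    rw [smul_eq_mul]
    push_cast
    field_simp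
  · intro hr
    obtain ⟨_, ⟨m, n, hn, h, rfl⟩, rfl⟩ := Set.mem_smul_set.1 hr
    refine ⟨k * m, n, hn, ?_, ?_⟩
    · convert nsmul_mem h k using 1
      rw [smul_sub, ← smul_smul, smul_comm k n g]
    · push_cast
      ring

lemma unitBound_nsmul (k : ℕ) (g : G) : unitBound P u (k • g) = k * unitBound P u g := by
  rcases k.eq_zero_or_pos with rfl | hk
  · simpa using le_antisymm (by simpa using unitBound_le (m := 0) (n := 1) one_pos (by simp))
      (unitBound_nonneg 0)
  · rw [unitBound, unitRatios_nsmul hk, Real.sInf_smul_of_nonneg (by positivity), smul_eq_mul,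
      unitBound]

theorem IsOrderUnit.exists_nonneg_addMonoidHom (hu : IsOrderUnit P u) (x : G) :
    ∃ f : G →+ ℝ, (∀ q ∈ P, 0 ≤ f q) ∧ f u ≤ 1 ∧ f x = unitBound P u x := by
  obtain ⟨f, hle, hx⟩ := exists_addMonoidHom_le_of_subadditive hu.unitBound_add_le unitBound_nsmul x
  refine ⟨f, fun q hq => ?_, (hle u).trans ?_, hx⟩
  · have := (hle (-q)).trans (unitBound_le (m := 0) (n := 1) one_pos (by simpa using hq))
    rw [map_neg] at this
    simp only [CharP.cast_eq_zero, Nat.cast_one, div_one] at this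
    linarith
  · simpa using unitBound_le (m := 1) (n := 1) one_pos (by simp)

end OrderUnit

lemma Algebra.GrothendieckAddGroup.exists_eq_of_sub_of {N : Type*} [AddCommMonoid N]
    (g : GrothendieckAddGroup N) : ∃ s t, g = of s - of t := by
  induction g using AddLocalization.ind with
  | H y =>
    refine ⟨y.1, y.2, ?_⟩
    rw [AddLocalization.mk_eq_addMonoidOf_mk', AddSubmonoid.LocalizationMap.mk'_eq_iff_eq_add]
    exact (sub_add_cancel _ _).symm

section OrderedMonoid

variable {M : Type*} [AddCommMonoid M] [PartialOrder M] [IsOrderedAddMonoid M]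

lemma nsmul_add_le_nsmul_add_s10 {x y e : M} (h : x + e ≤ y + e) (k : ℕ) :
    k • x + e ≤ k • y + e := by
  induction k with
  | zero => simp
  | succ k ih =>
    calc (k + 1) • x + e = k • x + (x + e) := by rw [succ_nsmul]; abel
      _ ≤ k • x + (y + e) := add_le_add_right h _
      _ = (k • x + e) + y := by abel
      _ ≤ (k • y + e) + y := add_le_add_left ih _
      _ = (k + 1) • y + e := by rw [succ_nsmul]; abel

lemma le_mul_of_nsmul_add_le (hM : ∀ s : M, 0 ≤ s) {a x e : M} {m n N L : ℕ} (hn : 0 < n)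
    (he : e ≤ N • a) (h : n • x + e ≤ m • a + e) (hL : ∀ k, 1 ≤ k → ¬ (k * L) • x ≤ k • a) :
    n ≤ L * m := by
  by_contra! hlt
  -- `k` copies of `h` absorb `e ≤ N • a`, and `k * n ≥ k * (L * m + 1) > L * (k * m + N)`.
  obtain ⟨k, hk_def⟩ : ∃ k, k = L * N + 1 := ⟨_, rfl⟩
  have hk : (k * n) • x ≤ (k * m + N) • a :=
    calc (k * n) • x = k • n • x := (smul_smul k n x).symm
      _ ≤ k • n • x + e := le_add_of_nonneg_right (hM e)
      _ ≤ k • m • a + e := nsmul_add_le_nsmul_add_s10 h k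
      _ ≤ k • m • a + N • a := add_le_add_right he _
      _ = (k * m + N) • a := by rw [add_nsmul, smul_smul]
  refine hL (k * n) (Nat.mul_pos (by omega) hn) ?_
  calc (k * n * L) • x = L • (k * n) • x := by rw [smul_smul, mul_comm]
    _ ≤ L • (k * m + N) • a := nsmul_le_nsmul_right hk L
    _ = (L * (k * m + N)) • a := smul_smul _ _ _
    _ ≤ (k * n) • a := nsmul_le_nsmul_left (hM a) (by nlinarith [Nat.mul_le_mul_left k hlt])

variable (M) in
def dominatedBy (a : M) : AddSubmonoid M where
  carrier := {s | ∃ n : ℕ, s ≤ n • a}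
  zero_mem' := ⟨0, by simp⟩
  add_mem' := fun ⟨n, hn⟩ ⟨m, hm⟩ => ⟨n + m, by rw [add_nsmul]; exact add_le_add hn hm⟩

lemma self_mem_dominatedBy (a : M) : a ∈ dominatedBy M a := ⟨1, by simp⟩

lemma mem_dominatedBy_of_le {a s t : M} (h : s ≤ t) (ht : t ∈ dominatedBy M a) :
    s ∈ dominatedBy M a :=
  let ⟨n, hn⟩ := ht
  ⟨n, h.trans hn⟩

def positiveCone (N : AddSubmonoid M) : AddSubmonoid (GrothendieckAddGroup N) :=
  AddSubmonoid.map (of.comp (AddMonoidHom.snd N N) - of.comp (AddMonoidHom.fst N N))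
    { carrier := {q | (q.1 : M) ≤ q.2}
      zero_mem' := le_rfl
      add_mem' := fun h h' => add_le_add h h' }

lemma of_sub_of_mem_positiveCone {N : AddSubmonoid M} {s t : N} (h : (s : M) ≤ t) :
    of t - of s ∈ positiveCone N :=
  ⟨(s, t), h, rfl⟩

lemma exists_add_le_add_of_mem_positiveCone {N : AddSubmonoid M} {s t : N}
    (h : of t - of s ∈ positiveCone N) : ∃ e : N, (s : M) + e ≤ t + e := by
  obtain ⟨⟨s', t'⟩, hle, heq⟩ := h
  have hof : of (t' + s) = of (t + s') := by
    rw [map_add, map_add, ← sub_eq_sub_iff_add_eq_add]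
    exact heq
  obtain ⟨c, hc⟩ := (AddLocalization.addMonoidOf ⊤).eq_iff_exists.1 hof
  have hc' : (c : M) + (t' + s) = c + (t + s') := congrArg Subtype.val hc
  refine ⟨s' + c, ?_⟩
  calc (s : M) + (s' + c) ≤ s + (t' + c) := add_le_add_right (add_le_add_left hle _) _
    _ = c + (t' + s) := by abel
    _ = c + (t + s') := hc'
    _ = t + (s' + c) := by abel

lemma isOrderUnit_positiveCone_dominatedBy (hM : ∀ s : M, 0 ≤ s) (a : M) :
    IsOrderUnit (positiveCone (dominatedBy M a)) (of ⟨a, self_mem_dominatedBy a⟩) := by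
  intro g
  obtain ⟨s, t, rfl⟩ := GrothendieckAddGroup.exists_eq_of_sub_of g
  obtain ⟨m, hm⟩ := s.2
  refine ⟨m, ?_⟩
  have h : m • of ⟨a, self_mem_dominatedBy a⟩ - (of s - of t) =
      of (m • ⟨a, self_mem_dominatedBy a⟩ + t) - of s := by
    rw [map_add, map_nsmul]
    abel
  rw [h]
  exact of_sub_of_mem_positiveCone (hm.trans (le_add_of_nonneg_right (hM t)))

lemma unitBound_pos (hM : ∀ s : M, 0 ≤ s) {a x : M} {l L : ℕ} (hx : x ≤ l • a)
    (hL : ∀ k, 1 ≤ k → ¬ (k * L) • x ≤ k • a) :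
    0 < unitBound (positiveCone (dominatedBy M a)) (of ⟨a, self_mem_dominatedBy a⟩)
      (of ⟨x, l, hx⟩) := by
  have hL0 : 0 < L := Nat.pos_of_ne_zero fun h => hL 1 le_rfl (by simpa [h] using hM a)
  refine lt_of_lt_of_le (inv_pos.2 (Nat.cast_pos.2 hL0))
    ((isOrderUnit_positiveCone_dominatedBy hM a).le_unitBound fun m n hn hmem => ?_)
  rw [← map_nsmul, ← map_nsmul] at hmem
  obtain ⟨e, he⟩ := exists_add_le_add_of_mem_positiveCone hmem
  obtain ⟨N, hN⟩ := e.2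
  have hnm : (n : ℝ) ≤ L * m := by
    exact_mod_cast le_mul_of_nsmul_add_le hM hn hN (by simpa using he) hL
  rw [inv_eq_one_div, div_le_div_iff₀ (by positivity) (by positivity)]
  linarith

variable (M) in
open Classical in
noncomputable def extendByTop (a : M) (f : GrothendieckAddGroup (dominatedBy M a) →+ ℝ)
    (s : M) : ℝ≥0∞ :=
  if h : s ∈ dominatedBy M a then ENNReal.ofReal (f (of ⟨s, h⟩)) else ⊤

variable {a : M} {f : GrothendieckAddGroup (dominatedBy M a) →+ ℝ}

lemma extendByTop_of_mem {s : M} (h : s ∈ dominatedBy M a) :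
    extendByTop M a f s = ENNReal.ofReal (f (of ⟨s, h⟩)) :=
  dif_pos h

lemma extendByTop_add (hM : ∀ s : M, 0 ≤ s) (hf : ∀ q ∈ positiveCone (dominatedBy M a), 0 ≤ f q)
    (s t : M) : extendByTop M a f (s + t) = extendByTop M a f s + extendByTop M a f t := by
  by_cases hs : s ∈ dominatedBy M a
  · by_cases ht : t ∈ dominatedBy M a
    · have hof_nonneg : ∀ r : dominatedBy M a, 0 ≤ f (of r) := fun r => by
        simpa using hf _ (of_sub_of_mem_positiveCone (s := 0) (t := r) (hM r))
      rw [extendByTop_of_mem hs, extendByTop_of_mem ht, extendByTop_of_mem (add_mem hs ht),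
        ← ENNReal.ofReal_add (hof_nonneg _) (hof_nonneg _), ← map_add, ← map_add]
      rfl
    · have hst : s + t ∉ dominatedBy M a := fun h =>
        ht (mem_dominatedBy_of_le (le_add_of_nonneg_left (hM s)) h)
      simp [extendByTop, ht, hst]
  · have hst : s + t ∉ dominatedBy M a := fun h =>
      hs (mem_dominatedBy_of_le (le_add_of_nonneg_right (hM t)) h)
    simp [extendByTop, hs, hst]

lemma monotone_extendByTop (hf : ∀ q ∈ positiveCone (dominatedBy M a), 0 ≤ f q) :
    Monotone (extendByTop M a f) := by
  intro s t hst
  by_cases ht : t ∈ dominatedBy M a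
  · have hs := mem_dominatedBy_of_le hst ht
    rw [extendByTop_of_mem hs, extendByTop_of_mem ht]
    have := hf _ (of_sub_of_mem_positiveCone (s := ⟨s, hs⟩) (t := ⟨t, ht⟩) hst)
    rw [map_sub] at this
    exact ENNReal.ofReal_le_ofReal (sub_nonneg.1 this)
  · simp [extendByTop, ht]

theorem exists_monotone_addMonoidHom (hM : ∀ s : M, 0 ≤ s) {x : M} {l L : ℕ}
    (hx : x ≤ l • a) (hL : ∀ k, 1 ≤ k → ¬ (k * L) • x ≤ k • a) :
    ∃ d : M →+ ℝ≥0∞, Monotone d ∧ d a ≤ 1 ∧ d x ≠ 0 := by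
  obtain ⟨f, hfP, hfa, hfx⟩ :=
    (isOrderUnit_positiveCone_dominatedBy hM a).exists_nonneg_addMonoidHom (of ⟨x, l, hx⟩)
  have hx_pos : 0 < f (of ⟨x, l, hx⟩) := hfx ▸ unitBound_pos hM hx hL
  refine ⟨⟨⟨extendByTop M a f, ?_⟩, extendByTop_add hM hfP⟩, monotone_extendByTop hfP, ?_, ?_⟩
  · rw [extendByTop_of_mem (zero_mem _)]
    change ENNReal.ofReal (f (of 0)) = 0
    simp
  · simpa [extendByTop_of_mem (self_mem_dominatedBy a)] using hfa
  · simpa [extendByTop_of_mem (show x ∈ dominatedBy M a from ⟨l, hx⟩)] using hx_pos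

end OrderedMonoid
section WayBelow

variable {S : Type*} [Preorder S]

lemma CuWayBelow.le {a b : S} (h : CuWayBelow a b) : a ≤ b := by
  obtain ⟨n, hn⟩ := h (fun _ => b) monotone_const b (by simp [isLUB_singleton]) le_rfl
  exact hn

lemma CuWayBelow.trans_le {a b c : S} (h : CuWayBelow a b) (hbc : b ≤ c) : CuWayBelow a c :=
  fun f hf s hs hcs => h f hf s hs (hbc.trans hcs)

lemma monotone_of_cuWayBelow_succ {f : ℕ → S} (hf : ∀ n, CuWayBelow (f n) (f (n + 1))) :
    Monotone f :=
  monotone_nat_of_le_succ fun n => (hf n).le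

lemma cuWayBelow_of_isLUB {f : ℕ → S} {b : S} (hf : ∀ n, CuWayBelow (f n) (f (n + 1)))
    (hb : IsLUB (Set.range f) b) (n : ℕ) : CuWayBelow (f n) b :=
  (hf n).trans_le (hb.1 ⟨n + 1, rfl⟩)

noncomputable def lowerRegularization (d : S → ℝ≥0∞) (b : S) : ℝ≥0∞ :=
  ⨆ c : {c : S // CuWayBelow c b}, d c

variable {d : S → ℝ≥0∞}

lemma lowerRegularization_le (hd : Monotone d) (b : S) : lowerRegularization d b ≤ d b :=
  iSup_le fun c => hd c.2.le

lemma le_lowerRegularization {b c : S} (h : CuWayBelow c b) : d c ≤ lowerRegularization d b :=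
  le_iSup_of_le (⟨c, h⟩ : {c : S // CuWayBelow c b}) le_rfl

lemma monotone_lowerRegularization : Monotone (lowerRegularization d) :=
  fun _ _ hbc => iSup_le fun c => le_lowerRegularization (c.2.trans_le hbc)

lemma lowerRegularization_eq_iSup (hd : Monotone d) {b : S} {f : ℕ → S}
    (hf : ∀ n, CuWayBelow (f n) (f (n + 1))) (hb : IsLUB (Set.range f) b) :
    lowerRegularization d b = ⨆ n, d (f n) := by
  refine le_antisymm (iSup_le fun c => ?_) (iSup_le fun n => le_lowerRegularization
    (cuWayBelow_of_isLUB hf hb n))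
  obtain ⟨n, hn⟩ := c.2 f (monotone_of_cuWayBelow_succ hf) b hb le_rfl
  exact le_iSup_of_le n (hd hn)

end WayBelow

section CuSemigroup

variable {S : Type*} [AddCommMonoid S] [PartialOrder S]

lemma IsCuSemigroup.isOrderedAddMonoid (hS : IsCuSemigroup S) : IsOrderedAddMonoid S where
  add_le_add_left a b h c := hS.add_le_add a b c h

lemma lowerRegularization_add (hS : IsCuSemigroup S) (d : S →+ ℝ≥0∞) (hd : Monotone d)
    (b c : S) :
    lowerRegularization d (b + c) = lowerRegularization d b + lowerRegularization d c := by
  obtain ⟨f, hf, hfb⟩ := hS.O2 b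
  obtain ⟨g, hg, hgc⟩ := hS.O2 c
  have hfm := monotone_of_cuWayBelow_succ hf
  have hgm := monotone_of_cuWayBelow_succ hg
  rw [lowerRegularization_eq_iSup hd (fun n => hS.O3 _ _ _ _ (hf n) (hg n))
      (hS.O4 f g hfm hgm b c hfb hgc), lowerRegularization_eq_iSup hd hf hfb,
    lowerRegularization_eq_iSup hd hg hgc]
  simp only [map_add]
  exact (ENNReal.iSup_add_iSup_of_monotone (hd.comp hfm) (hd.comp hgm)).symm

lemma lowerRegularization_isLUB (hS : IsCuSemigroup S) {d : S → ℝ≥0∞} (hd : Monotone d)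
    {g : ℕ → S} {b : S} (hg : Monotone g) (hb : IsLUB (Set.range g) b) :
    lowerRegularization d b = ⨆ m, lowerRegularization d (g m) := by
  refine le_antisymm ?_ (iSup_le fun m => monotone_lowerRegularization (hb.1 ⟨m, rfl⟩))
  obtain ⟨f, hf, hfb⟩ := hS.O2 b
  rw [lowerRegularization_eq_iSup hd hf hfb]
  refine iSup_le fun n => ?_
  -- `f (n + 1) ≪ b` is met by some `g m`, so `f n ≪ g m`.
  obtain ⟨m, hm⟩ := cuWayBelow_of_isLUB hf hfb (n + 1) g hg b hb le_rfl
  exact le_iSup_of_le m (le_lowerRegularization ((hf n).trans_le hm))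

theorem isCuFunctional_lowerRegularization (hS : IsCuSemigroup S) (d : S →+ ℝ≥0∞)
    (hd : Monotone d) : IsCuFunctional (lowerRegularization d) where
  map_zero := le_antisymm ((lowerRegularization_le hd 0).trans (map_zero d).le) bot_le
  map_add := lowerRegularization_add hS d hd
  mono _ _ h := monotone_lowerRegularization h
  map_lub _ hg _ hb := lowerRegularization_isLUB hS hd hg hb

lemma IsCuFunctional.const_mul {lam : S → ℝ≥0∞} (hlam : IsCuFunctional lam) (c : ℝ≥0∞) :
    IsCuFunctional fun s => c * lam s where
  map_zero := by simp [hlam.map_zero]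
  map_add a b := by simp [hlam.map_add, mul_add]
  mono a b h := by gcongr; exact hlam.mono a b h
  map_lub f hf s hs := by rw [hlam.map_lub f hf s hs, ENNReal.mul_iSup]

lemma IsCuFunctional.map_nsmul {lam : S → ℝ≥0∞} (hlam : IsCuFunctional lam) (n : ℕ) (b : S) :
    lam (n • b) = n * lam b := by
  induction n with
  | zero => simp [hlam.map_zero]
  | succ n ih => rw [succ_nsmul, hlam.map_add, ih, Nat.cast_succ, add_mul, one_mul]

lemma IsCuFunctional.nsmul_le_nsmul_iff (hS : IsCuSemigroup S) {lam : S → ℝ≥0∞}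
    (hlam : IsCuFunctional lam) {a : S} (ha : lam a = 1) (m n : ℕ) : m • a ≤ n • a ↔ m ≤ n := by
  have := hS.isOrderedAddMonoid
  refine ⟨fun h => ?_, nsmul_le_nsmul_left (hS.zero_le a)⟩
  have := hlam.mono _ _ h
  rwa [hlam.map_nsmul, hlam.map_nsmul, ha, mul_one, mul_one, Nat.cast_le] at this

lemma IsCuFunctional.exists_cuWayBelow_not_nsmul_le (hS : IsCuSemigroup S) {lam : S → ℝ≥0∞}
    (hlam : IsCuFunctional lam) {a : S} (ha : lam a = 1) :
    ∃ x, CuWayBelow x a ∧ ∀ k : ℕ, 1 ≤ k → ¬ (k * 2) • x ≤ k • a := by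
  obtain ⟨f, hf, hfa⟩ := hS.O2 a
  have hsup : 1 < ⨆ n, 2 * lam (f n) := by
    rw [← ENNReal.mul_iSup, ← hlam.map_lub f (monotone_of_cuWayBelow_succ hf) a hfa, ha, mul_one]
    exact ENNReal.one_lt_two
  obtain ⟨n, hn⟩ := lt_iSup_iff.1 hsup
  refine ⟨f n, cuWayBelow_of_isLUB hf hfa n, fun k hk hle => ?_⟩
  have hk0 : (k : ℝ≥0∞) ≠ 0 := by exact_mod_cast (by omega : k ≠ 0)
  have hlt := ENNReal.mul_lt_mul_left hk0 (ENNReal.natCast_ne_top k) hn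
  rw [one_mul, mul_comm] at hlt
  have := hlam.mono _ _ hle
  rw [hlam.map_nsmul, hlam.map_nsmul, ha, mul_one, Nat.cast_mul, mul_assoc] at this
  exact this.not_gt hlt

end CuSemigroup

/-- Let `S` be a Cu-semigroup and `a ∈ S`.  The following
are equivalent:
(1) `m•a ≤ n•a` iff `m ≤ n`, and there exist `l L ∈ ℕ` and `x ∈ S` with
`x ≪ l•a` and `(k*L)•x ≤ k•a` failing for every `k ≥ 1`;
(2) there is a functional `λ` on `S` with `λ a = 1`. -/
theorem stmt10 {S : Type*} [AddCommMonoid S] [PartialOrder S]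
    (hS : IsCuSemigroup S) (a : S) :
    ((∀ m n : ℕ, m • a ≤ n • a ↔ m ≤ n) ∧
      ∃ (l L : ℕ) (x : S), CuWayBelow x (l • a) ∧
        ∀ k : ℕ, 1 ≤ k → ¬ (k * L) • x ≤ k • a)
    ↔ (∃ lam : S → ℝ≥0∞, IsCuFunctional lam ∧ lam a = 1) := by
  refine ⟨fun ⟨_, l, L, x, hxa, hL⟩ => ?_,
    fun ⟨lam, hlam, ha⟩ => ⟨hlam.nsmul_le_nsmul_iff hS ha, 1, 2, ?_⟩⟩
  · have := hS.isOrderedAddMonoid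
    obtain ⟨d, hd, hda, hdx⟩ := exists_monotone_addMonoidHom hS.zero_le hxa.le hL
    have hlam := isCuFunctional_lowerRegularization hS d hd
    have ha_top : lowerRegularization d a ≠ ⊤ :=
      ((lowerRegularization_le hd a).trans hda |>.trans_lt ENNReal.one_lt_top).ne
    have ha_zero : lowerRegularization d a ≠ 0 := fun h0 => hdx <| le_zero_iff.1 <| by
      simpa [hlam.map_nsmul, h0] using le_lowerRegularization (d := d) hxa
    exact ⟨fun s => (lowerRegularization d a)⁻¹ * lowerRegularization d s, hlam.const_mul _,
      ENNReal.inv_mul_cancel ha_zero ha_top⟩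
  · simpa using hlam.exists_cuWayBelow_not_nsmul_le hS ha
end
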